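/- arXiv:1407.3395 — 7 statements merged into one kernel-verified Lean document; each statement's English description precedes it below -/
import Mathlib

section
/- Let y₀ > 0 and v₀ > 0 be real numbers, let L ≥ 2 be an integer, let f : ℝ² → ℝ be infinitely differentiable on the open rectangle (−y₀,y₀)×(−v₀,v₀), and define g(z,v) = Σ_{l=0}^L a_l f(l z, v) for (z,v) ∈ (−y₀/L, y₀/L)×(−v₀,v₀). Then for every (z,v) ∈ [−y₀/(2L), y₀/(2L)] × [−v₀/2, v₀/2] one has |g(z,v)| ≤ c |z|^L, where c = (1/L!) · sup{ |∂_z^L g(z,v)| : (z,v) ∈ [−y₀/(2L), y₀/(2L)] × [−v₀/2, v₀/2] } is finite. -/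
open Finset fwdDiff in
private lemma fwd_pow_zero : ∀ k L : ℕ, k < L →
    (fwdDiff (1:ℕ))^[L] (fun n : ℕ => (n:ℝ)^k) = 0 := by
  intro k
  induction k using Nat.strong_induction_on with
  | _ k IH =>
    intro L hkL
    obtain ⟨L', rfl⟩ : ∃ L', L = L' + 1 := ⟨L-1, by omega⟩
    rw [Function.iterate_succ_apply]
    have hΔ : fwdDiff (1:ℕ) (fun n : ℕ => (n:ℝ)^k)
        = ∑ m ∈ range k, (k.choose m : ℝ) • (fun n : ℕ => (n:ℝ)^m) := by
      funext n
      simp only [fwdDiff, Finset.sum_apply, Pi.smul_apply, smul_eq_mul]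
      have hb : ((n+1:ℕ):ℝ)^k = ∑ m ∈ range (k+1), (n:ℝ)^m * (1:ℝ)^(k-m) * (k.choose m : ℝ) := by
        push_cast
        rw [add_pow]
      rw [hb, Finset.sum_range_succ]
      simp only [one_pow, mul_one, Nat.choose_self, Nat.cast_one]
      rw [add_sub_cancel_right]
      exact Finset.sum_congr rfl fun m _ => by ring
    rw [hΔ, fwdDiff_iter_finset_sum]
    refine Finset.sum_eq_zero fun m hm => ?_
    rw [fwdDiff_iter_const_smul, IH m (Finset.mem_range.1 hm) L' (by
      have := Finset.mem_range.1 hm; omega), smul_zero]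

private lemma alt_sum_pow (L k : ℕ) (hk : k < L) :
    ∑ l ∈ Finset.range (L+1), (-1:ℝ)^(L-l) * (L.choose l : ℝ) * (l:ℝ)^k = 0 := by
  have h := fwdDiff_iter_eq_sum_shift (1:ℕ) (fun n : ℕ => (n:ℝ)^k) L 0
  rw [fwd_pow_zero k L hk] at h
  simp only [Pi.zero_apply, zero_add, smul_eq_mul, mul_one, zsmul_eq_mul] at h
  rw [eq_comm] at h
  rw [← h]
  push_cast
  exact Finset.sum_congr rfl fun l _ => by ring


open Set in
private lemma aux_T1 {h : ℝ → ℝ} {a b : ℝ} (hab : a < b) {O : Set ℝ}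
    (hsub : Set.Icc a b ⊆ O)
    (hsm : ∀ k, ∀ z ∈ O, HasDerivAt (iteratedDeriv k h) (iteratedDeriv (k+1) h z) z) :
    ∀ k, ∀ x ∈ Set.Icc a b, iteratedDerivWithin k h (Set.Icc a b) x = iteratedDeriv k h x := by
  intro k
  induction k with
  | zero => intro x hx; simp [iteratedDerivWithin_zero]
  | succ k IH =>
    intro x hx
    rw [iteratedDerivWithin_succ,
        derivWithin_congr IH (IH x hx),
        (hsm k x (hsub hx)).differentiableAt.derivWithin ((uniqueDiffOn_Icc hab) x hx),
        iteratedDeriv_succ, (hsm k x (hsub hx)).deriv]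

open Set in
private lemma aux_pos {L : ℕ} (hL : 1 ≤ L) {h : ℝ → ℝ} {r : ℝ} {O : Set ℝ}
    (hsub : Set.Icc (-r) r ⊆ O)
    (hcd : ContDiffOn ℝ (⊤:ℕ∞) h O)
    (hsm : ∀ k, ∀ z ∈ O, HasDerivAt (iteratedDeriv k h) (iteratedDeriv (k+1) h z) z)
    (hzero : ∀ k < L, iteratedDeriv k h 0 = 0)
    {M : ℝ} (hM : ∀ x ∈ Set.Icc (-r) r, |iteratedDeriv L h x| ≤ M)
    {z : ℝ} (hz0 : 0 < z) (hzr : z ≤ r) :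
    |h z| ≤ M / L.factorial * z ^ L := by
  have hr0 : 0 < r := lt_of_lt_of_le hz0 hzr
  have hIcc : Set.Icc 0 z ⊆ Set.Icc (-r) r := Set.Icc_subset_Icc (by linarith) hzr
  have hsubO : Set.Icc 0 z ⊆ O := hIcc.trans hsub
  have T1 := aux_T1 hz0 hsubO hsm
  have hL1 : L - 1 + 1 = L := Nat.succ_pred_eq_of_pos hL
  have hf : ContDiffOn ℝ (L-1 : ℕ) h (Set.Icc 0 z) :=
    (hcd.mono hsubO).of_le (by exact WithTop.coe_le_coe.2 le_top)
  have hf' : DifferentiableOn ℝ (iteratedDerivWithin (L-1) h (Set.Icc 0 z)) (Set.Ioo 0 z) := by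
    intro x hx
    have hxI : x ∈ Set.Icc 0 z := Set.Ioo_subset_Icc_self hx
    exact ((hsm (L-1) x (hsubO hxI)).differentiableAt.differentiableWithinAt).congr
      (fun y hy => T1 (L-1) y (Set.Ioo_subset_Icc_self hy)) (T1 (L-1) x hxI)
  obtain ⟨x', hx', heq⟩ := taylor_mean_remainder_lagrange (n := L-1) hz0.ne
    (by rwa [Set.uIcc_of_le hz0.le]) (by rwa [Set.uIcc_of_le hz0.le, Set.uIoo_of_le hz0.le])
  rw [Set.uIcc_of_le hz0.le] at heq
  rw [Set.uIoo_of_le hz0.le] at hx'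
  have hP : taylorWithinEval h (L-1) (Set.Icc 0 z) 0 z = 0 := by
    rw [taylor_within_apply]
    refine Finset.sum_eq_zero fun k hk => ?_
    have hkL : k < L := by have := Finset.mem_range.1 hk; omega
    rw [T1 k 0 (Set.left_mem_Icc.2 hz0.le), hzero k hkL, smul_zero]
  have hx'I : x' ∈ Set.Icc 0 z := Set.Ioo_subset_Icc_self hx'
  rw [hP, sub_zero, sub_zero, hL1, T1 L x' hx'I] at heq
  rw [heq]
  have hb : |iteratedDeriv L h x'| ≤ M := hM x' (hIcc hx'I)
  rw [abs_div, abs_mul, abs_pow, abs_of_pos hz0, Nat.abs_cast]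
  have hfac : (0:ℝ) < (L.factorial : ℝ) := by exact_mod_cast L.factorial_pos
  rw [div_le_iff₀ hfac] at *
  calc |iteratedDeriv L h x'| * z ^ L ≤ M * z ^ L := by
        exact mul_le_mul_of_nonneg_right hb (pow_nonneg hz0.le L)
    _ = M / ↑L.factorial * z ^ L * ↑L.factorial := by field_simp


private noncomputable def pd (F : ℝ × ℝ → ℝ) : ℕ → ℝ × ℝ → ℝ
  | 0 => F
  | (k+1) => fun p => fderiv ℝ (pd F k) p (1, 0)

private lemma pd_contDiffOn {F : ℝ × ℝ → ℝ} {U : Set (ℝ × ℝ)} (hU : IsOpen U)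
    (hF : ContDiffOn ℝ (⊤:ℕ∞) F U) : ∀ k, ContDiffOn ℝ (⊤:ℕ∞) (pd F k) U := by
  intro k
  induction k with
  | zero => exact hF
  | succ k IH =>
    have hd : ContDiffOn ℝ (⊤:ℕ∞) (fderiv ℝ (pd F k)) U :=
      IH.fderiv_of_isOpen hU (le_of_eq rfl)
    exact hd.clm_apply contDiffOn_const

private lemma pd_slice {F : ℝ × ℝ → ℝ} {U : Set (ℝ × ℝ)} (hU : IsOpen U)
    (hF : ContDiffOn ℝ (⊤:ℕ∞) F U) (k : ℕ) (l v z : ℝ)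
    (hp : ((l * z : ℝ), v) ∈ U) :
    HasDerivAt (fun z' => pd F k (l * z', v)) (l * pd F (k+1) (l * z, v)) z := by
  have hdiff : DifferentiableAt ℝ (pd F k) (l * z, v) :=
    ((pd_contDiffOn hU hF k).contDiffAt (hU.mem_nhds hp)).differentiableAt
      (by simp)
  have hu : HasDerivAt (fun z' : ℝ => ((l * z', v) : ℝ × ℝ)) ((l * 1, 0) : ℝ × ℝ) z :=
    ((hasDerivAt_id z).const_mul l).prodMk (hasDerivAt_const z v)
  have H := hdiff.hasFDerivAt.comp_hasDerivAt z hu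
  have hval : fderiv ℝ (pd F k) (l * z, v) (l * 1, 0) = l * pd F (k+1) (l * z, v) := by
    have : ((l * 1, 0) : ℝ × ℝ) = l • ((1, 0) : ℝ × ℝ) := by
      simp [Prod.smul_mk]
    rw [this, ContinuousLinearMap.map_smul, smul_eq_mul]
    rfl
  rw [hval] at H
  exact H



private lemma aux_sym {L : ℕ} (hL : 1 ≤ L) {h : ℝ → ℝ} {r : ℝ} {O : Set ℝ}
    (hsub : Set.Icc (-r) r ⊆ O)
    (hcd : ContDiffOn ℝ (⊤:ℕ∞) h O)
    (hsm : ∀ k, ∀ z ∈ O, HasDerivAt (iteratedDeriv k h) (iteratedDeriv (k+1) h z) z)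
    (hzero : ∀ k < L, iteratedDeriv k h 0 = 0)
    {M : ℝ} (hM : ∀ x ∈ Set.Icc (-r) r, |iteratedDeriv L h x| ≤ M)
    {z : ℝ} (hz : z ∈ Set.Icc (-r) r) :
    |h z| ≤ M / L.factorial * |z| ^ L := by
  rcases lt_trichotomy z 0 with hneg | rfl | hpos
  · set h' : ℝ → ℝ := fun t => h (-t) with hh'
    set O' : Set ℝ := Neg.neg ⁻¹' O with hO'def
    have hsub' : Set.Icc (-r) r ⊆ O' := by
      intro x hx
      exact hsub ⟨by simpa using neg_le_neg hx.2, by simpa using neg_le_neg hx.1⟩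
    have hcd' : ContDiffOn ℝ (⊤:ℕ∞) h' O' :=
      ContDiffOn.comp hcd (contDiff_neg.contDiffOn) (fun x hx => hx)
    have hiter : ∀ k, iteratedDeriv k h' = fun t => (-1:ℝ)^k • iteratedDeriv k h (-t) :=
      fun k => funext fun t => iteratedDeriv_comp_neg k h t
    have hsm' : ∀ k, ∀ t ∈ O', HasDerivAt (iteratedDeriv k h') (iteratedDeriv (k+1) h' t) t := by
      intro k t ht
      rw [hiter k, hiter (k+1)]
      have h1 : HasDerivAt (fun s : ℝ => iteratedDeriv k h (-s))
          (iteratedDeriv (k+1) h (-t) * (-1)) t :=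
        HasDerivAt.comp t (hsm k (-t) ht) (hasDerivAt_neg t)
      have h2 := h1.const_mul ((-1:ℝ)^k)
      simp only [smul_eq_mul]
      refine h2.congr_deriv ?_
      ring
    have hzero' : ∀ k < L, iteratedDeriv k h' 0 = 0 := by
      intro k hk
      rw [hiter k]
      simp [hzero k hk]
    have hM' : ∀ x ∈ Set.Icc (-r) r, |iteratedDeriv L h' x| ≤ M := by
      intro x hx
      rw [hiter L]
      simp only [smul_eq_mul, abs_mul, abs_pow, abs_neg, abs_one, one_pow, one_mul]
      refine hM (-x) ⟨by simpa using neg_le_neg hx.2, by simpa using neg_le_neg hx.1⟩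
    have hres := aux_pos hL hsub' hcd' hsm' hzero' hM'
      (z := -z) (by linarith) (by linarith [hz.1])
    have : h' (-z) = h z := by simp [hh']
    rw [this] at hres
    rwa [abs_of_neg hneg]
  · have h0 : h 0 = 0 := by simpa using hzero 0 (by omega)
    simp [h0, zero_pow (by omega : L ≠ 0)]
  · have hres := aux_pos hL hsub hcd hsm hzero hM hpos hz.2
    rwa [abs_of_pos hpos]



private noncomputable def Sfun (f : ℝ → ℝ → ℝ) (L k : ℕ) (v z : ℝ) : ℝ :=
  ∑ l ∈ Finset.range (L+1), (-1:ℝ)^(L-l) * (L.choose l : ℝ) * (l:ℝ)^k *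
    pd (fun p : ℝ × ℝ => f p.1 p.2) k ((l:ℝ) * z, v)


/-- Taylor-type bound for the filtered function
`g(z,v) = Σ_{l=0}^L a_l f(l z, v)` with `a_l = (−1)^{L−l}·(L choose l)`:
for `(z,v)` in the closed rectangle `[−y₀/(2L), y₀/(2L)] × [−v₀/2, v₀/2]` one has
`|g(z,v)| ≤ c |z|^L` where
`c = (1/L!) · sup{|∂_z^L g(z,v)| : (z,v) ∈ [−y₀/(2L), y₀/(2L)] × [−v₀/2, v₀/2]}`
is finite (the set of values is bounded above). -/
theorem taylor_bound_filtered_function (L : ℕ) (hL : 2 ≤ L) (y₀ v₀ : ℝ)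
    (hy₀ : 0 < y₀) (hv₀ : 0 < v₀) (f : ℝ → ℝ → ℝ)
    (hf : ContDiffOn ℝ (⊤ : ℕ∞) (fun p : ℝ × ℝ => f p.1 p.2)
      (Set.Ioo (-y₀) y₀ ×ˢ Set.Ioo (-v₀) v₀))
    (g : ℝ → ℝ → ℝ)
    (hg : ∀ z ∈ Set.Ioo (-(y₀ / L)) (y₀ / L), ∀ v ∈ Set.Ioo (-v₀) v₀,
      g z v = ∑ l ∈ Finset.range (L + 1),
        ((-1 : ℝ) ^ (L - l) * (L.choose l : ℝ)) * f ((l : ℝ) * z) v)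
    (c : ℝ)
    (hc : c = (1 / (L.factorial : ℝ)) *
      sSup {x : ℝ | ∃ z ∈ Set.Icc (-(y₀ / (2 * L))) (y₀ / (2 * L)),
        ∃ v ∈ Set.Icc (-(v₀ / 2)) (v₀ / 2),
          x = |iteratedDeriv L (fun z' => g z' v) z|}) :
    BddAbove {x : ℝ | ∃ z ∈ Set.Icc (-(y₀ / (2 * L))) (y₀ / (2 * L)),
        ∃ v ∈ Set.Icc (-(v₀ / 2)) (v₀ / 2),
          x = |iteratedDeriv L (fun z' => g z' v) z|} ∧
    ∀ z ∈ Set.Icc (-(y₀ / (2 * L))) (y₀ / (2 * L)),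
      ∀ v ∈ Set.Icc (-(v₀ / 2)) (v₀ / 2), |g z v| ≤ c * |z| ^ L := by
  have hL2 : (2:ℝ) ≤ (L:ℝ) := by exact_mod_cast hL
  have hLpos : (0:ℝ) < (L:ℝ) := by linarith
  have hUopen : IsOpen (Set.Ioo (-y₀) y₀ ×ˢ Set.Ioo (-v₀) v₀) :=
    isOpen_Ioo.prod isOpen_Ioo
  have hFU : ContDiffOn ℝ (⊤:ℕ∞) (fun p : ℝ × ℝ => f p.1 p.2)
      (Set.Ioo (-y₀) y₀ ×ˢ Set.Ioo (-v₀) v₀) := hf.of_le (by simp)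
  have hOopen : IsOpen (Set.Ioo (-(y₀ / L)) (y₀ / L)) := isOpen_Ioo
  have h0O : (0:ℝ) ∈ Set.Ioo (-(y₀ / L)) (y₀ / L) := by
    have hd : 0 < y₀ / L := div_pos hy₀ hLpos
    exact ⟨by linarith, hd⟩
  -- membership of the scaled points
  have hmem : ∀ l : ℕ, l ≤ L → ∀ z ∈ Set.Ioo (-(y₀ / L)) (y₀ / L),
      ∀ v ∈ Set.Ioo (-v₀) v₀,
      (((l:ℝ) * z, v) : ℝ × ℝ) ∈ Set.Ioo (-y₀) y₀ ×ˢ Set.Ioo (-v₀) v₀ := by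
    intro l hl z hz v hv
    refine ⟨?_, hv⟩
    have hzabs : |z| < y₀ / L := abs_lt.2 ⟨hz.1, hz.2⟩
    have habs : |(l:ℝ) * z| < y₀ := by
      rw [abs_mul, Nat.abs_cast]
      calc (l:ℝ) * |z| ≤ (L:ℝ) * |z| :=
            mul_le_mul_of_nonneg_right (by exact_mod_cast hl) (abs_nonneg z)
        _ < (L:ℝ) * (y₀ / L) := by
            rcases eq_or_lt_of_le (abs_nonneg z) with h0 | h0
            · rw [← h0, mul_zero]; positivity
            · exact mul_lt_mul_of_pos_left hzabs hLpos
        _ = y₀ := by field_simp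
    exact abs_lt.1 habs
  -- derivative of the explicit sum
  have hC2 : ∀ v ∈ Set.Ioo (-v₀) v₀, ∀ k, ∀ z ∈ Set.Ioo (-(y₀ / L)) (y₀ / L),
      HasDerivAt (Sfun f L k v) (Sfun f L (k+1) v z) z := by
    intro v hv k z hz
    have H : HasDerivAt (fun z => ∑ l ∈ Finset.range (L+1),
          (-1:ℝ)^(L-l) * (L.choose l : ℝ) * (l:ℝ)^k *
            pd (fun p : ℝ × ℝ => f p.1 p.2) k ((l:ℝ) * z, v))
        (∑ l ∈ Finset.range (L+1), (-1:ℝ)^(L-l) * (L.choose l : ℝ) * (l:ℝ)^k *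
            ((l:ℝ) * pd (fun p : ℝ × ℝ => f p.1 p.2) (k+1) ((l:ℝ) * z, v))) z := by
      refine HasDerivAt.fun_sum fun l hl => ?_
      exact (pd_slice hUopen hFU k (l:ℝ) v z
        (hmem l (by have := Finset.mem_range.1 hl; omega) z hz v hv)).const_mul _
    have hval : (∑ l ∈ Finset.range (L+1),
        (-1:ℝ)^(L-l) * (L.choose l : ℝ) * (l:ℝ)^(k+1) *
          pd (fun p : ℝ × ℝ => f p.1 p.2) (k+1) ((l:ℝ) * z, v)) =
        ∑ l ∈ Finset.range (L+1),
        (-1:ℝ)^(L-l) * (L.choose l : ℝ) * (l:ℝ)^k *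
          ((l:ℝ) * pd (fun p : ℝ × ℝ => f p.1 p.2) (k+1) ((l:ℝ) * z, v)) :=
      Finset.sum_congr rfl fun l _ => by ring
    unfold Sfun
    rw [hval]
    exact H
  -- the iterated derivatives of the slices of g coincide with the explicit sums
  have hC1 : ∀ v ∈ Set.Ioo (-v₀) v₀, ∀ k,
      Set.EqOn (iteratedDeriv k (fun z' => g z' v)) (Sfun f L k v)
        (Set.Ioo (-(y₀ / L)) (y₀ / L)) := by
    intro v hv k
    induction k with
    | zero =>
      intro z hz
      rw [iteratedDeriv_zero]
      rw [hg z hz v hv, Sfun]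
      exact Finset.sum_congr rfl fun l _ => by simp [pd]
    | succ k IH =>
      intro z hz
      rw [iteratedDeriv_succ]
      have hev : iteratedDeriv k (fun z' => g z' v) =ᶠ[nhds z] Sfun f L k v :=
        Filter.eventuallyEq_of_mem (hOopen.mem_nhds hz) IH
      rw [hev.deriv_eq]
      exact (hC2 v hv k z hz).deriv
  have hzero : ∀ v ∈ Set.Ioo (-v₀) v₀, ∀ k < L,
      iteratedDeriv k (fun z' => g z' v) 0 = 0 := by
    intro v hv k hk
    rw [hC1 v hv k h0O]
    have hval : Sfun f L k v 0 = (∑ l ∈ Finset.range (L+1),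
        (-1:ℝ)^(L-l) * (L.choose l : ℝ) * (l:ℝ)^k) *
          pd (fun p : ℝ × ℝ => f p.1 p.2) k (0, v) := by
      rw [Finset.sum_mul, Sfun]
      exact Finset.sum_congr rfl fun l _ => by rw [mul_zero]
    rw [hval, alt_sum_pow L k hk, zero_mul]
  -- the closed rectangle sits inside the open domains
  have hKO : Set.Icc (-(y₀ / (2 * L))) (y₀ / (2 * L)) ⊆
      Set.Ioo (-(y₀ / L)) (y₀ / L) := by
    intro x hx
    have h1 : y₀ / (2 * L) < y₀ / L := by
      apply div_lt_div_of_pos_left hy₀ hLpos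
      linarith
    exact ⟨by linarith [hx.1], by linarith [hx.2]⟩
  have hVIoo : Set.Icc (-(v₀ / 2)) (v₀ / 2) ⊆ Set.Ioo (-v₀) v₀ := by
    intro x hx
    exact ⟨by linarith [hx.1], by linarith [hx.2]⟩
  -- boundedness
  have hK : IsCompact ((Set.Icc (-(y₀ / (2 * L))) (y₀ / (2 * L)) ×ˢ
      Set.Icc (-(v₀ / 2)) (v₀ / 2)) : Set (ℝ × ℝ)) := isCompact_Icc.prod isCompact_Icc
  have hΦ : ContinuousOn (fun p : ℝ × ℝ => |Sfun f L L p.2 p.1|)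
      (Set.Icc (-(y₀ / (2 * L))) (y₀ / (2 * L)) ×ˢ Set.Icc (-(v₀ / 2)) (v₀ / 2)) := by
    apply ContinuousOn.abs
    simp only [Sfun]
    apply continuousOn_finset_sum
    intro l hl
    apply ContinuousOn.mul continuousOn_const
    refine ContinuousOn.comp ((pd_contDiffOn hUopen hFU L).continuousOn)
      (Continuous.continuousOn (by fun_prop)) ?_
    rintro ⟨z, v⟩ ⟨hz, hv⟩
    exact hmem l (by have := Finset.mem_range.1 hl; omega) z (hKO hz) v (hVIoo hv)
  have hSsub : {x : ℝ | ∃ z ∈ Set.Icc (-(y₀ / (2 * L))) (y₀ / (2 * L)),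
        ∃ v ∈ Set.Icc (-(v₀ / 2)) (v₀ / 2),
          x = |iteratedDeriv L (fun z' => g z' v) z|} ⊆
      (fun p : ℝ × ℝ => |Sfun f L L p.2 p.1|) ''
        (Set.Icc (-(y₀ / (2 * L))) (y₀ / (2 * L)) ×ˢ Set.Icc (-(v₀ / 2)) (v₀ / 2)) := by
    rintro x ⟨z, hz, v, hv, rfl⟩
    exact ⟨(z, v), ⟨hz, hv⟩, by rw [hC1 v (hVIoo hv) L (hKO hz)]⟩
  have hBdd : BddAbove {x : ℝ | ∃ z ∈ Set.Icc (-(y₀ / (2 * L))) (y₀ / (2 * L)),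
        ∃ v ∈ Set.Icc (-(v₀ / 2)) (v₀ / 2),
          x = |iteratedDeriv L (fun z' => g z' v) z|} :=
    ((hK.image_of_continuousOn hΦ).bddAbove).mono hSsub
  refine ⟨hBdd, ?_⟩
  intro z hz v hv
  have hvIoo : v ∈ Set.Ioo (-v₀) v₀ := hVIoo hv
  -- smoothness of the slice
  have hScd0 : ContDiffOn ℝ (⊤:ℕ∞) (fun z => ∑ l ∈ Finset.range (L+1),
      (-1:ℝ)^(L-l) * (L.choose l : ℝ) * (l:ℝ)^0 *
        pd (fun p : ℝ × ℝ => f p.1 p.2) 0 ((l:ℝ) * z, v))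
      (Set.Ioo (-(y₀ / L)) (y₀ / L)) := by
    apply ContDiffOn.sum
    intro l hl
    apply ContDiffOn.mul contDiffOn_const
    refine ContDiffOn.comp (pd_contDiffOn hUopen hFU 0)
      (ContDiff.contDiffOn (by fun_prop)) ?_
    intro x hx
    exact hmem l (by have := Finset.mem_range.1 hl; omega) x hx v hvIoo
  have hScd : ContDiffOn ℝ (⊤:ℕ∞) (Sfun f L 0 v) (Set.Ioo (-(y₀ / L)) (y₀ / L)) :=
    hScd0.congr fun x hx => by rw [Sfun]
  have hcd : ContDiffOn ℝ (⊤:ℕ∞) (fun z' => g z' v) (Set.Ioo (-(y₀ / L)) (y₀ / L)) :=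
    hScd.congr fun x hx => by
      have h0 := hC1 v hvIoo 0 hx
      rw [iteratedDeriv_zero] at h0
      exact h0
  have hsm : ∀ k, ∀ x ∈ Set.Ioo (-(y₀ / L)) (y₀ / L),
      HasDerivAt (iteratedDeriv k (fun z' => g z' v))
        (iteratedDeriv (k+1) (fun z' => g z' v) x) x := by
    intro k x hx
    have hev : iteratedDeriv k (fun z' => g z' v) =ᶠ[nhds x] Sfun f L k v :=
      Filter.eventuallyEq_of_mem (hOopen.mem_nhds hx) (hC1 v hvIoo k)
    rw [hC1 v hvIoo (k+1) hx]
    exact (hC2 v hvIoo k x hx).congr_of_eventuallyEq hev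
  have hM : ∀ x ∈ Set.Icc (-(y₀ / (2 * L))) (y₀ / (2 * L)),
      |iteratedDeriv L (fun z' => g z' v) x| ≤
        sSup {x : ℝ | ∃ z ∈ Set.Icc (-(y₀ / (2 * L))) (y₀ / (2 * L)),
          ∃ v ∈ Set.Icc (-(v₀ / 2)) (v₀ / 2),
            x = |iteratedDeriv L (fun z' => g z' v) z|} :=
    fun x hx => le_csSup hBdd ⟨x, hx, v, hv, rfl⟩
  have hmain := aux_sym (le_trans (by norm_num) hL) hKO hcd hsm
    (hzero v hvIoo) hM hz
  rw [hc]
  calc |g z v| = |(fun z' => g z' v) z| := rfl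
    _ ≤ _ := hmain
    _ = (1 / (L.factorial : ℝ)) * sSup _ * |z| ^ L := by ring
end

section
/- For every fixed v ∈ (1/α, 1), the function u ↦ Φ_α(u,v) vanishes on (L, +∞), i.e. its support is contained in (−∞, L]. Moreover, sup{ (1 + L + |u|)^{L + 1/α − v} · |Φ_α(u,v)| : u ∈ (−∞, L], v ∈ (1/α, 1) } < +∞. -/
/-
For `u ≤ -1` all the points `l - u` lie in `[1, ∞)`, so `Φ_α(u,v)` is the `L`-th forward
difference of `t ↦ t ^ κ` (with `κ = v - 1/α ∈ (0,1)`) at `x = -u`. Passing the difference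
through the derivative one step at a time and bounding each step by the mean value theorem gives
`|Δ^L (·^κ) x| ≤ |κ (κ-1) ⋯ (κ-L+1)| x^(κ-L) ≤ L! x^(κ-L)`, which exactly compensates the
weight `(1+L+x)^(L-κ)`. For `-1 < u ≤ L` both the weight and `Φ_α` are bounded termwise, and for
`u > L` every `(l-u)_+` vanishes.
-/

/-- `(x)_+^κ = x^κ` if `x > 0`, and `0` otherwise. -/
noncomputable def posPow (x κ : ℝ) : ℝ := if 0 < x then x ^ κ else 0

/-- `Φ_α(u,v) = Σ_{l=0}^L a_l (l−u)_+^{v−1/α}` with `a_l = (−1)^{L−l}·(L choose l)`. -/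
noncomputable def Phi (α : ℝ) (L : ℕ) (u v : ℝ) : ℝ :=
  ∑ l ∈ Finset.range (L + 1),
    ((-1 : ℝ) ^ (L - l) * (L.choose l : ℝ)) * posPow ((l : ℝ) - u) (v - 1 / α)

open Finset
open scoped fwdDiff Nat

-- `Δ_[h] ^[n]` needs the space: `]^` is a token of the exterior power notation `⋀[R]^n`.

theorem HasDerivAt.fwdDiff_iter {𝕜 F : Type*} [NontriviallyNormedField 𝕜]
    [NormedAddCommGroup F] [NormedSpace 𝕜 F] {f f' : 𝕜 → F} {h x : 𝕜} (n : ℕ)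
    (hf : ∀ k ≤ n, HasDerivAt f (f' (x + k • h)) (x + k • h)) :
    HasDerivAt (Δ_[h] ^[n] f) (Δ_[h] ^[n] f' x) x := by
  rw [funext (fwdDiff_iter_eq_sum_shift h f n), fwdDiff_iter_eq_sum_shift]
  refine HasDerivAt.fun_sum fun k hk => ?_
  exact ((hf k (Nat.lt_succ_iff.mp (mem_range.mp hk))).comp_add_const x _).const_smul
    ((-1 : ℤ) ^ (n - k) * n.choose k)

theorem abs_fwdDiff_iter_rpow_le (n : ℕ) {κ : ℝ} (hκ : κ ≤ 1) {x : ℝ} (hx : 0 < x) :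
    |Δ_[1] ^[n] (· ^ κ) x| ≤ (∏ j ∈ range n, |κ - j|) * x ^ (κ - n) := by
  induction n generalizing κ x with
  | zero => simp [abs_of_nonneg (Real.rpow_nonneg hx.le κ)]
  | succ n ih =>
    have hderiv : ∀ t ∈ Set.Ici x, HasDerivWithinAt (Δ_[1] ^[n] (· ^ κ))
        (κ • Δ_[1] ^[n] (· ^ (κ - 1)) t) (Set.Ici x) t := by
      intro t ht
      rw [← Pi.smul_apply, ← fwdDiff_iter_const_smul]
      refine (HasDerivAt.fwdDiff_iter n fun k _ => ?_).hasDerivWithinAt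
      have : 0 < t := hx.trans_le ht
      exact Real.hasDerivAt_rpow_const (Or.inl (by simp; positivity))
    have hbound : ∀ t ∈ Set.Ici x, ‖κ • Δ_[1] ^[n] (· ^ (κ - 1)) t‖
        ≤ |κ| * ((∏ j ∈ range n, |κ - 1 - j|) * x ^ (κ - 1 - n)) := by
      intro t ht
      rw [smul_eq_mul, Real.norm_eq_abs, abs_mul]
      gcongr
      refine (ih (by linarith) (hx.trans_le ht)).trans
        (mul_le_mul_of_nonneg_left ?_ (by positivity))
      exact Real.rpow_le_rpow_of_nonpos hx ht (by linarith [(n.cast_nonneg : (0 : ℝ) ≤ n)])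
    have hmvt := (convex_Ici x).norm_image_sub_le_of_norm_hasDerivWithin_le hderiv hbound
      Set.self_mem_Ici (show x + 1 ∈ Set.Ici x by simp)
    rw [Function.iterate_succ_apply', fwdDiff, ← Real.norm_eq_abs]
    convert hmvt using 1
    rw [prod_range_succ', add_sub_cancel_left, norm_one, mul_one]
    push_cast
    simp only [sub_add_eq_sub_sub, sub_zero, sub_right_comm κ _ (1 : ℝ)]
    ring

theorem prod_abs_sub_natCast_le_factorial {κ : ℝ} (hκ0 : 0 ≤ κ) (hκ1 : κ ≤ 1) (n : ℕ) :
    ∏ j ∈ range n, |κ - j| ≤ n ! := by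
  rw [← prod_range_add_one_eq_factorial, Nat.cast_prod]
  refine prod_le_prod (fun _ _ => abs_nonneg _) fun j _ => abs_le.2 ⟨?_, ?_⟩ <;>
    push_cast <;> linarith [(j.cast_nonneg : (0 : ℝ) ≤ j)]

theorem rpow_natCast_sub_le_pow {a κ : ℝ} (ha : 1 ≤ a) (hκ : 0 ≤ κ) (n : ℕ) :
    a ^ (n - κ) ≤ a ^ n := by
  simpa using Real.rpow_le_rpow_of_exponent_le ha (sub_le_self (n : ℝ) hκ)

theorem rpow_sub_mul_abs_fwdDiff_iter_rpow_le {κ : ℝ} (hκ0 : 0 ≤ κ) (hκ1 : κ ≤ 1) (n : ℕ)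
    {x : ℝ} (hx : 1 ≤ x) :
    (1 + n + x) ^ (n - κ) * |Δ_[1] ^[n] (· ^ κ) x| ≤ n ! * (2 + n) ^ n := by
  have hx0 : 0 < x := zero_lt_one.trans_le hx
  have hratio : 1 ≤ (1 + n + x) / x ∧ (1 + n + x) / x ≤ 2 + n := by
    rw [one_le_div hx0, div_le_iff₀ hx0]
    constructor <;> nlinarith [(n.cast_nonneg : (0 : ℝ) ≤ n)]
  have hweight : (1 + n + x) ^ (n - κ) * x ^ (κ - n) = ((1 + n + x) / x) ^ (n - κ) := by
    rw [Real.div_rpow (by positivity) hx0.le, ← neg_sub κ, Real.rpow_neg hx0.le, div_eq_mul_inv,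
      inv_inv]
  calc (1 + n + x) ^ (n - κ) * |Δ_[1] ^[n] (· ^ κ) x|
      ≤ (1 + n + x) ^ (n - κ) * (n ! * x ^ (κ - n)) := by
        gcongr
        exact (abs_fwdDiff_iter_rpow_le n hκ1 hx0).trans
          (mul_le_mul_of_nonneg_right (prod_abs_sub_natCast_le_factorial hκ0 hκ1 n)
            (by positivity))
    _ = n ! * ((1 + n + x) / x) ^ (n - κ) := by rw [← hweight]; ring
    _ ≤ n ! * (2 + n) ^ n := by
        gcongr
        exact (rpow_natCast_sub_le_pow hratio.1 hκ0 n).trans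
          (pow_le_pow_left₀ (by linarith) hratio.2 n)

theorem posPow_nonneg (x κ : ℝ) : 0 ≤ posPow x κ := by
  unfold posPow
  split_ifs with hx
  exacts [Real.rpow_nonneg hx.le κ, le_rfl]

theorem posPow_le {x κ M : ℝ} (hκ0 : 0 ≤ κ) (hκ1 : κ ≤ 1) (hM : 1 ≤ M) (hx : x ≤ M) :
    posPow x κ ≤ M := by
  unfold posPow
  split_ifs with hx0
  · exact (Real.rpow_le_rpow hx0.le hx hκ0).trans (Real.rpow_le_self_of_one_le hM hκ1)
  · linarith

section Phi

variable (α : ℝ) (L : ℕ) {u : ℝ} (v : ℝ)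

theorem Phi_eq_zero_of_lt (hu : (L : ℝ) < u) : Phi α L u v = 0 := by
  refine sum_eq_zero fun l hl => ?_
  have : (l : ℝ) ≤ L := by exact_mod_cast Nat.lt_succ_iff.mp (mem_range.mp hl)
  simp [posPow, show ¬ 0 < (l : ℝ) - u by linarith]

theorem Phi_eq_fwdDiff_iter_rpow (hu : u < 0) :
    Phi α L u v = Δ_[1] ^[L] (· ^ (v - 1 / α)) (-u) := by
  rw [fwdDiff_iter_eq_sum_shift, Phi]
  refine sum_congr rfl fun l _ => ?_
  rw [posPow, if_pos (by linarith [(l.cast_nonneg : (0 : ℝ) ≤ l)])]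
  simp [sub_eq_neg_add]

theorem abs_Phi_le (hκ0 : 0 ≤ v - 1 / α) (hκ1 : v - 1 / α ≤ 1) (hu : -1 ≤ u) :
    |Phi α L u v| ≤ 2 ^ L * (L + 1) := by
  refine (abs_sum_le_sum_abs _ _).trans ?_
  have hchoose : (2 : ℝ) ^ L = ∑ l ∈ range (L + 1), (L.choose l : ℝ) := by
    exact_mod_cast (Nat.sum_range_choose L).symm
  rw [hchoose, sum_mul]
  refine sum_le_sum fun l hl => ?_
  have hl : (l : ℝ) ≤ L := by exact_mod_cast Nat.lt_succ_iff.mp (mem_range.mp hl)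
  rw [abs_mul, abs_mul, abs_pow, abs_neg, abs_one, one_pow, one_mul, Nat.abs_cast,
    abs_of_nonneg (posPow_nonneg _ _)]
  gcongr
  exact posPow_le hκ0 hκ1 (by linarith [(L.cast_nonneg : (0 : ℝ) ≤ L)]) (by linarith)

end Phi

theorem localization_of_Phi_general (α : ℝ) (hα : α ∈ Set.Ioo (1 : ℝ) 2) (L : ℕ) :
    (∀ v ∈ Set.Ioo (1 / α) (1 : ℝ), ∀ u : ℝ, (L : ℝ) < u → Phi α L u v = 0) ∧
    ∃ C : ℝ, ∀ u : ℝ, u ≤ (L : ℝ) → ∀ v ∈ Set.Ioo (1 / α) (1 : ℝ),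
      (1 + (L : ℝ) + |u|) ^ ((L : ℝ) + 1 / α - v) * |Phi α L u v| ≤ C := by
  refine ⟨fun v _ u hu => Phi_eq_zero_of_lt α L v hu,
    L ! * (2 + L) ^ L + (2 + 2 * L) ^ L * (2 ^ L * (L + 1)), fun u hu v hv => ?_⟩
  have hκ0 : 0 ≤ v - 1 / α := by linarith [hv.1]
  have hκ1 : v - 1 / α ≤ 1 := by linarith [hv.2, one_div_pos.2 (zero_lt_one.trans hα.1)]
  rw [show (L : ℝ) + 1 / α - v = L - (v - 1 / α) by ring]
  have hL0 : (0 : ℝ) ≤ L := L.cast_nonneg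
  rcases le_or_gt u (-1) with hu1 | hu1
  · rw [Phi_eq_fwdDiff_iter_rpow α L v (by linarith), abs_of_neg (by linarith)]
    exact (rpow_sub_mul_abs_fwdDiff_iter_rpow_le hκ0 hκ1 L (by linarith)).trans
      (le_add_of_nonneg_right (by positivity))
  · have habs : |u| ≤ L + 1 := abs_le.2 ⟨by linarith, by linarith⟩
    have hweight : (1 + L + |u|) ^ ((L : ℝ) - (v - 1 / α)) ≤ (2 + 2 * L) ^ L :=
      (rpow_natCast_sub_le_pow (by linarith [abs_nonneg u]) hκ0 L).trans
        (pow_le_pow_left₀ (by positivity) (by linarith) L)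
    exact (mul_le_mul hweight (abs_Phi_le α L v hκ0 hκ1 hu1.le) (abs_nonneg _)
      (by positivity)).trans (le_add_of_nonneg_left (by positivity))

/-- For every fixed `v ∈ (1/α,1)`, `Φ_α(·,v)` vanishes on `(L,+∞)`,
and `sup{(1+L+|u|)^{L+1/α−v}·|Φ_α(u,v)| : u ≤ L, v ∈ (1/α,1)} < +∞`. -/
theorem localization_of_Phi (α : ℝ) (hα : α ∈ Set.Ioo (1 : ℝ) 2) (L : ℕ)
    (hL : 2 ≤ L) :
    (∀ v ∈ Set.Ioo (1 / α) (1 : ℝ), ∀ u : ℝ, (L : ℝ) < u → Phi α L u v = 0) ∧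
    ∃ C : ℝ, ∀ u : ℝ, u ≤ (L : ℝ) → ∀ v ∈ Set.Ioo (1 / α) (1 : ℝ),
      (1 + (L : ℝ) + |u|) ^ ((L : ℝ) + 1 / α - v) * |Phi α L u v| ≤ C :=
  localization_of_Phi_general α hα L
end

section
/- There exists a finite constant c > 0 (depending only on α and L) such that for every real number x > 2L and every v ∈ (1/α,1) one has |Σ_{l=0}^L a_l (1 + l/x)^{v − 1/α} · log(1 + l/x)| ≤ c · x^{−L}. -/
/-!
With `s = v - 1/α ∈ (0, 1)` and `h = 1/x`, the sum is the `L`-th forward difference with step `h`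
at `0` of `f y = (1 + y)^s log (1 + y)`, so by the mean value theorem it is at most
`h^L sup |f⁽ᴸ⁾|` over `[0, L h] ⊆ [0, 1]`. Since `f = ∂ₛ (1 + y)^s`, the `i`-th derivative of `f` is
`P_i(s) (1 + y)^(s-i) log (1 + y) + P_i'(s) (1 + y)^(s-i)` with `P_i` the descending Pochhammer
polynomial, and for `|s| ≤ 1 ≤ L` this is bounded by `L! + L · L! = (L + 1)!`.
-/

open Finset Polynomial Real fwdDiff
open scoped Nat

theorem norm_fwdDiff_iterate_le {E : Type*} [NormedAddCommGroup E] [NormedSpace ℝ E]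
    {a h M : ℝ} (hh : 0 ≤ h) {n : ℕ} {F : ℕ → ℝ → E}
    (hF : ∀ i < n, ∀ y ∈ Set.Icc a (a + n * h), HasDerivAt (F i) (F (i + 1) y) y)
    (hM : ∀ y ∈ Set.Icc a (a + n * h), ‖F n y‖ ≤ M) :
    ‖(Δ_[h])^[n] (F 0) a‖ ≤ M * h ^ n := by
  induction n generalizing F M with
  | zero => simpa using hM a (by simp)
  | succ n ih =>
    have hstep : ∀ y ∈ Set.Icc a (a + n * h),
        Set.Icc y (y + h) ⊆ Set.Icc a (a + (n + 1 : ℕ) * h) := by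
      rintro y ⟨hay, hyn⟩
      apply Set.Icc_subset_Icc hay
      push_cast
      linarith
    rw [Function.iterate_succ_apply, pow_succ', ← mul_assoc]
    refine ih (F := fun i => Δ_[h] (F i)) (fun i hi y hy => ?_) (fun y hy => ?_)
    · have hy' := hstep y hy
      exact ((hF i (by omega) _ (hy' ⟨by linarith, le_rfl⟩)).comp_add_const y h).sub
        (hF i (by omega) y (hy' ⟨le_rfl, by linarith⟩))
    · have := norm_image_sub_le_of_norm_deriv_le_segment' (f := F n) (f' := F (n + 1)) (C := M)
        (fun z hz => (hF n (by omega) z (hstep y hy hz)).hasDerivWithinAt)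
        (fun z hz => hM z (hstep y hy (Set.Ico_subset_Icc_self hz))) (y + h) ⟨by linarith, le_rfl⟩
      simpa [fwdDiff] using this

theorem abs_sub_natCast_le {s : ℝ} (hs : |s| ≤ 1) (n : ℕ) : |s - n| ≤ n + 1 := by
  rw [abs_le] at hs ⊢
  constructor <;> linarith [hs.1, hs.2, (n.cast_nonneg : (0 : ℝ) ≤ n)]

theorem abs_descPochhammer_eval_le {s : ℝ} (hs : |s| ≤ 1) (n : ℕ) :
    |(descPochhammer ℝ n).eval s| ≤ n ! := by
  induction n with
  | zero => simp
  | succ n ih =>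
    rw [descPochhammer_succ_eval, abs_mul, Nat.factorial_succ, Nat.cast_mul,
      mul_comm ((n + 1 : ℕ) : ℝ), Nat.cast_succ]
    exact mul_le_mul ih (abs_sub_natCast_le hs n) (abs_nonneg _) (by positivity)

theorem derivative_descPochhammer_succ {R : Type*} [CommRing R] (n : ℕ) :
    derivative (descPochhammer R (n + 1)) =
      derivative (descPochhammer R n) * (X - (n : R[X])) + descPochhammer R n := by
  rw [descPochhammer_succ_right, derivative_mul]
  simp

theorem abs_derivative_descPochhammer_eval_le {s : ℝ} (hs : |s| ≤ 1) (n : ℕ) :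
    |(derivative (descPochhammer ℝ n)).eval s| ≤ n * n ! := by
  induction n with
  | zero => simp
  | succ n ih =>
    rw [derivative_descPochhammer_succ, eval_add, eval_mul, eval_sub, eval_X, eval_natCast]
    calc _ ≤ |(derivative (descPochhammer ℝ n)).eval s| * |s - n|
            + |(descPochhammer ℝ n).eval s| := by
          rw [← abs_mul]
          exact abs_add_le _ _
      _ ≤ n * n ! * (n + 1) + n ! :=
          add_le_add (mul_le_mul ih (abs_sub_natCast_le hs n) (abs_nonneg _) (by positivity))
            (abs_descPochhammer_eval_le hs n)
      _ ≤ ((n + 1 : ℕ) : ℝ) * (n + 1)! := by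
          push_cast [Nat.factorial_succ]
          nlinarith [(n !).cast_nonneg (α := ℝ), (n.cast_nonneg : (0 : ℝ) ≤ n)]

noncomputable def rpowMulLogDeriv (s : ℝ) (i : ℕ) (y : ℝ) : ℝ :=
  (descPochhammer ℝ i).eval s * (1 + y) ^ (s - i) * log (1 + y)
    + (derivative (descPochhammer ℝ i)).eval s * (1 + y) ^ (s - i)

theorem rpowMulLogDeriv_zero (s y : ℝ) :
    rpowMulLogDeriv s 0 y = (1 + y) ^ s * log (1 + y) := by
  simp [rpowMulLogDeriv]

theorem hasDerivAt_rpowMulLogDeriv (s : ℝ) (i : ℕ) {y : ℝ} (hy : 0 < 1 + y) :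
    HasDerivAt (rpowMulLogDeriv s i) (rpowMulLogDeriv s (i + 1) y) y := by
  have hpow : HasDerivAt (fun z => (1 + z) ^ (s - i)) ((s - i) * (1 + y) ^ (s - i - 1)) y := by
    simpa using ((hasDerivAt_id y).const_add 1).rpow_const (p := s - i) (Or.inl hy.ne')
  have hlog : HasDerivAt (fun z => log (1 + z)) (1 + y)⁻¹ y := by
    simpa using ((hasDerivAt_id y).const_add 1).log hy.ne'
  refine (((hpow.const_mul ((descPochhammer ℝ i).eval s)).fun_mul hlog).fun_add
    (hpow.const_mul ((derivative (descPochhammer ℝ i)).eval s))).congr_deriv ?_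
  rw [rpowMulLogDeriv, Nat.cast_succ, ← sub_sub, rpow_sub_one hy.ne', descPochhammer_succ_eval,
    derivative_descPochhammer_succ]
  simp only [eval_add, eval_mul, eval_sub, eval_X, eval_natCast]
  field_simp
  ring

theorem abs_rpowMulLogDeriv_le {s y : ℝ} {n : ℕ} (hs : |s| ≤ 1) (hsn : s ≤ n) (hy : 0 ≤ y)
    (hy1 : y ≤ 1) : |rpowMulLogDeriv s n y| ≤ (n + 1)! := by
  have hpow : (1 + y) ^ (s - n) ≤ 1 := rpow_le_one_of_one_le_of_nonpos (by linarith) (by linarith)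
  have hpow0 : 0 ≤ (1 + y) ^ (s - n) := by positivity
  have hlog0 : 0 ≤ log (1 + y) := log_nonneg (by linarith)
  have hlog : log (1 + y) ≤ 1 := (log_le_sub_one_of_pos (by linarith)).trans (by linarith)
  calc |rpowMulLogDeriv s n y|
      ≤ |(descPochhammer ℝ n).eval s| * ((1 + y) ^ (s - n) * log (1 + y))
        + |(derivative (descPochhammer ℝ n)).eval s| * (1 + y) ^ (s - n) := by
        refine (abs_add_le _ _).trans_eq ?_
        rw [abs_mul, abs_mul, abs_mul, abs_of_nonneg hpow0, abs_of_nonneg hlog0, mul_assoc]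
    _ ≤ n ! * (1 * 1) + n * n ! * 1 := by
        gcongr
        · exact abs_descPochhammer_eval_le hs n
        · exact abs_derivative_descPochhammer_eval_le hs n
    _ = (n + 1)! := by
        push_cast [Nat.factorial_succ]
        ring

/-- There is a finite constant `c > 0` (depending only on `α, L`)
such that for every `x > 2L` and every `v ∈ (1/α,1)`,
`|Σ_{l=0}^L a_l (1+l/x)^{v−1/α}·log(1+l/x)| ≤ c·x^{−L}`, where
`a_l = (−1)^{L−l}·(L choose l)`. -/
theorem log_term_decay (α : ℝ) (hα : α ∈ Set.Ioo (1 : ℝ) 2) (L : ℕ)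
    (hL : 2 ≤ L) :
    ∃ c > (0 : ℝ), ∀ x : ℝ, 2 * (L : ℝ) < x → ∀ v ∈ Set.Ioo (1 / α) (1 : ℝ),
      |∑ l ∈ Finset.range (L + 1), ((-1 : ℝ) ^ (L - l) * (L.choose l : ℝ)) *
          (1 + (l : ℝ) / x) ^ (v - 1 / α) * Real.log (1 + (l : ℝ) / x)|
        ≤ c * x ^ (-(L : ℝ)) := by
  refine ⟨(L + 1)!, by positivity, fun x hx v ⟨hv1, hv2⟩ => ?_⟩
  have hL2 : (2 : ℝ) ≤ L := by exact_mod_cast hL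
  have hx0 : 0 < x := by linarith
  have hα0 : 0 < 1 / α := one_div_pos.2 (by linarith [hα.1])
  set s := v - 1 / α
  have hs : |s| ≤ 1 := abs_le.2 ⟨by linarith, by linarith⟩
  have hLx : L * (1 / x) ≤ 1 := by
    rw [mul_one_div, div_le_one hx0]
    linarith
  have key := norm_fwdDiff_iterate_le (a := 0) (M := (L + 1)!) (F := rpowMulLogDeriv s)
    (one_div_nonneg.2 hx0.le) (fun i _ y hy => hasDerivAt_rpowMulLogDeriv s i (by linarith [hy.1]))
    (fun y hy => abs_rpowMulLogDeriv_le hs (by linarith) hy.1 (by linarith [hy.2]))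
  rw [fwdDiff_iter_eq_sum_shift, norm_eq_abs] at key
  convert key using 2
  · refine sum_congr rfl fun l _ => ?_
    rw [rpowMulLogDeriv_zero, zero_add, nsmul_eq_mul, mul_one_div, zsmul_eq_mul]
    push_cast
    ring
  · rw [rpow_neg hx0.le, rpow_natCast, one_div_pow, one_div]
end

section
/- There exists a finite constant c > 0 (depending only on α and L) such that for every real number x > 2L and all v₁, v₂ with 1/α < v₁ ≤ v₂ < 1 one has |Σ_{l=0}^L a_l (l + x)^{v₂ − 1/α} − Σ_{l=0}^L a_l (l + x)^{v₁ − 1/α}| ≤ c (v₂ − v₁) · x^{1/2 − L} · log(x). -/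
open Set Real fwdDiff

/-!
With `pᵢ = vᵢ - 1/α ∈ [0, 1/2]`, the sum is the `L`-th forward difference at `x` of
`g t = t ^ p₂ - t ^ p₁`, so by the mean value theorem, applied `L` times, it is bounded by
`sup |g⁽ᴸ⁾|` over `[x, x + L]`. Here `g⁽ᴸ⁾ t = P p₂ * t ^ (p₂ - L) - P p₁ * t ^ (p₁ - L)` with `P`
the descending Pochhammer polynomial, which is bounded and Lipschitz on `[0, 1/2]`; together with
`t ^ p₂ - t ^ p₁ ≤ (p₂ - p₁) t ^ p₂ log t` this bounds `|g⁽ᴸ⁾ t|` by a multiple of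
`(p₂ - p₁) t ^ (1/2 - L) log t`, and `t ≤ x + L ≤ x²` turns `log t` into at most `2 log x`.
-/

theorem abs_fwdDiff_iter_le_of_hasDerivAt {f : ℕ → ℝ → ℝ} {x h M : ℝ} (hh : 0 ≤ h) (n : ℕ)
    (hf : ∀ k < n, ∀ t ∈ Icc x (x + n * h), HasDerivAt (f k) (f (k + 1) t) t)
    (hM : ∀ t ∈ Icc x (x + n * h), |f n t| ≤ M) :
    |(Δ_[h])^[n] (f 0) x| ≤ M * h ^ n := by
  induction n generalizing f M with
  | zero => simpa using hM x (by simp)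
  | succ n ih =>
    have hstep : ∀ t ∈ Icc x (x + n * h), Icc t (t + h) ⊆ Icc x (x + (n + 1 : ℕ) * h) := by
      intro t ht u hu
      push_cast
      constructor <;> nlinarith [ht.1, ht.2, hu.1, hu.2]
    rw [Function.iterate_succ_apply, pow_succ', ← mul_assoc]
    refine ih (f := fun k => Δ_[h] (f k)) (fun k hk t ht => ?_) (fun t ht => ?_)
    · have hsub := hstep t ht
      exact ((hf k (by omega) (t + h) (hsub ⟨by linarith, le_rfl⟩)).comp_add_const t h).sub
        (hf k (by omega) t (hsub ⟨le_rfl, by linarith⟩))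
    · have hmvt := (convex_Icc t (t + h)).norm_image_sub_le_of_norm_hasDerivWithin_le
        (fun u hu => (hf n n.lt_succ_self u (hstep t ht hu)).hasDerivWithinAt)
        (fun u hu => hM u (hstep t ht hu)) (left_mem_Icc.2 (by linarith))
        (right_mem_Icc.2 (by linarith))
      simpa [fwdDiff, abs_of_nonneg hh] using hmvt

/-- `deriv^[k] (· ^ p)`, see `Real.iter_deriv_rpow_const`. -/
noncomputable def rpowIterDeriv (k : ℕ) (p t : ℝ) : ℝ := (descPochhammer ℝ k).eval p * t ^ (p - k)

lemma rpowIterDeriv_zero (p t : ℝ) : rpowIterDeriv 0 p t = t ^ p := by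
  simp [rpowIterDeriv]

lemma hasDerivAt_rpowIterDeriv (k : ℕ) (p : ℝ) {t : ℝ} (ht : t ≠ 0) :
    HasDerivAt (rpowIterDeriv k p) (rpowIterDeriv (k + 1) p t) t := by
  refine ((hasDerivAt_rpow_const (p := p - k) (Or.inl ht)).const_mul
    ((descPochhammer ℝ k).eval p)).congr_deriv ?_
  rw [rpowIterDeriv, descPochhammer_succ_eval]
  push_cast
  ring_nf

lemma rpow_sub_rpow_le_mul_log {t a b : ℝ} (ht : 1 ≤ t) :
    t ^ b - t ^ a ≤ t ^ b * log t * (b - a) := by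
  have ht0 : 0 < t := by linarith
  have hsplit : t ^ a = t ^ b * t ^ (a - b) := by rw [← rpow_add ht0]; ring_nf
  have hexp : 1 - (b - a) * log t ≤ t ^ (a - b) := by
    rw [rpow_def_of_pos ht0]; linarith [add_one_le_exp (log t * (a - b))]
  rw [hsplit]
  nlinarith [rpow_pos_of_pos ht0 b]

lemma fwdDiff_iter_one_eq_sum {R : Type*} [CommRing R] (f : R → R) (n : ℕ) (x : R) :
    (Δ_[1])^[n] f x =
      ∑ l ∈ Finset.range (n + 1), ((-1 : R) ^ (n - l) * n.choose l) * f (l + x) := by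
  rw [fwdDiff_iter_eq_sum_shift]
  refine Finset.sum_congr rfl fun l _ => ?_
  rw [zsmul_eq_mul, nsmul_one, add_comm]
  push_cast
  rfl

lemma exists_abs_rpowIterDeriv_sub_le (k : ℕ) (a b : ℝ) :
    ∃ C > 0, ∀ p₁ ∈ Icc a b, ∀ p₂ ∈ Icc a b, p₁ ≤ p₂ → ∀ t, exp 1 ≤ t →
      |rpowIterDeriv k p₂ t - rpowIterDeriv k p₁ t| ≤ C * (p₂ - p₁) * (t ^ (b - k) * log t) := by
  set P := descPochhammer ℝ k
  obtain ⟨A, hA⟩ := isCompact_Icc.exists_bound_of_continuousOn (s := Icc a b)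
    (P.continuous (R := ℝ)).continuousOn
  obtain ⟨K, hK⟩ := ContDiffOn.exists_lipschitzOnWith
    ((Polynomial.contDiff_aeval P 1).contDiffOn (s := Icc a b)) one_ne_zero (convex_Icc a b)
    isCompact_Icc
  refine ⟨|A| + K + 1, by positivity, fun p₁ hp₁ p₂ hp₂ hp₁₂ t ht => ?_⟩
  have ht1 : 1 ≤ t := (one_le_exp zero_le_one).trans ht
  have ht0 : 0 ≤ t := by linarith
  have hlog : 1 ≤ log t := by rwa [le_log_iff_exp_le (by linarith)]
  have hP : |P.eval p₂| ≤ |A| := by simpa using (hA p₂ hp₂).trans (le_abs_self A)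
  have hPP : |P.eval p₂ - P.eval p₁| ≤ K * (p₂ - p₁) := by
    simpa [Real.dist_eq, abs_of_nonneg (sub_nonneg.2 hp₁₂)] using hK.dist_le_mul p₂ hp₂ p₁ hp₁
  have hpow : ∀ p ∈ Icc a b, t ^ (p - k) ≤ t ^ (b - k) := fun p hp =>
    rpow_le_rpow_of_exponent_le ht1 (by linarith [hp.2])
  have hrpow : |t ^ (p₂ - k) - t ^ (p₁ - k)| ≤ (p₂ - p₁) * (t ^ (b - k) * log t) := by
    rw [abs_of_nonneg (sub_nonneg.2 (rpow_le_rpow_of_exponent_le ht1 (by linarith)))]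
    calc t ^ (p₂ - k) - t ^ (p₁ - k) ≤ t ^ (p₂ - k) * log t * ((p₂ - k) - (p₁ - k)) :=
          rpow_sub_rpow_le_mul_log ht1
      _ ≤ t ^ (b - k) * log t * (p₂ - p₁) := by
          rw [sub_sub_sub_cancel_right]
          gcongr ?_ * _ * _
          exact hpow p₂ hp₂
      _ = _ := by ring
  have hsplit : rpowIterDeriv k p₂ t - rpowIterDeriv k p₁ t =
      P.eval p₂ * (t ^ (p₂ - k) - t ^ (p₁ - k)) + (P.eval p₂ - P.eval p₁) * t ^ (p₁ - k) := by
    simp only [rpowIterDeriv, P]; ring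
  have hu : 0 ≤ (p₂ - p₁) * (t ^ (b - k) * log t) := by
    have := rpow_nonneg ht0 (b - k)
    have := sub_nonneg.2 hp₁₂
    positivity
  calc |rpowIterDeriv k p₂ t - rpowIterDeriv k p₁ t|
      ≤ |P.eval p₂| * |t ^ (p₂ - k) - t ^ (p₁ - k)| + |P.eval p₂ - P.eval p₁| * t ^ (p₁ - k) := by
        rw [hsplit, ← abs_mul, ← abs_of_nonneg (rpow_nonneg ht0 (p₁ - k)),
          ← abs_mul, abs_of_nonneg (rpow_nonneg ht0 (p₁ - k))]
        exact abs_add_le _ _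
    _ ≤ |A| * ((p₂ - p₁) * (t ^ (b - k) * log t)) + K * (p₂ - p₁) * (t ^ (b - k) * log t) := by
        gcongr
        exact (hpow p₁ hp₁).trans (le_mul_of_one_le_right (rpow_nonneg ht0 _) hlog)
    _ ≤ (|A| + K + 1) * (p₂ - p₁) * (t ^ (b - k) * log t) := by nlinarith

lemma exists_abs_fwdDiff_iter_rpow_sub_le (n : ℕ) {a b : ℝ} (hb : b ≤ n) :
    ∃ C > 0, ∀ p₁ ∈ Icc a b, ∀ p₂ ∈ Icc a b, p₁ ≤ p₂ → ∀ x, exp 1 ≤ x → (n : ℝ) ≤ x →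
      |(Δ_[1])^[n] (fun t => t ^ p₂ - t ^ p₁) x| ≤ C * (p₂ - p₁) * x ^ (b - n) * log x := by
  obtain ⟨C, hC, hdiff⟩ := exists_abs_rpowIterDeriv_sub_le n a b
  refine ⟨2 * C, by positivity, fun p₁ hp₁ p₂ hp₂ hp₁₂ x hex hnx => ?_⟩
  have hx0 : 0 < x := (exp_pos 1).trans_le hex
  have hx2 : 2 ≤ x := by linarith [exp_one_gt_d9]
  set f : ℕ → ℝ → ℝ := fun k t => rpowIterDeriv k p₂ t - rpowIterDeriv k p₁ t
  have hchain : ∀ k < n, ∀ t ∈ Icc x (x + n * 1), HasDerivAt (f k) (f (k + 1) t) t := by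
    intro k _ t ht
    have ht0 : t ≠ 0 := by linarith [ht.1]
    exact (hasDerivAt_rpowIterDeriv k p₂ ht0).sub (hasDerivAt_rpowIterDeriv k p₁ ht0)
  have hbound : ∀ t ∈ Icc x (x + n * 1), |f n t| ≤ 2 * C * (p₂ - p₁) * x ^ (b - n) * log x := by
    intro t ⟨hxt, htx⟩
    have hlog : log t ≤ 2 * log x := by
      rw [← log_rpow hx0]
      exact log_le_log (by linarith) (by norm_num; nlinarith)
    have hpow : t ^ (b - n) ≤ x ^ (b - n) := rpow_le_rpow_of_nonpos hx0 hxt (by linarith)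
    have : 0 ≤ log t := log_nonneg (by linarith)
    have : 0 ≤ C * (p₂ - p₁) := mul_nonneg hC.le (sub_nonneg.2 hp₁₂)
    calc |f n t| ≤ C * (p₂ - p₁) * (t ^ (b - n) * log t) :=
          hdiff p₁ hp₁ p₂ hp₂ hp₁₂ t (hex.trans hxt)
      _ ≤ C * (p₂ - p₁) * (x ^ (b - n) * (2 * log x)) := by gcongr
      _ = _ := by ring
  simpa [f, rpowIterDeriv_zero] using abs_fwdDiff_iter_le_of_hasDerivAt zero_le_one n hchain hbound

/-- There is a finite constant `c > 0` (depending only on `α, L`)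
such that for every `x > 2L` and all `1/α < v₁ ≤ v₂ < 1`,
`|Σ_{l=0}^L a_l (l+x)^{v₂−1/α} − Σ_{l=0}^L a_l (l+x)^{v₁−1/α}|
  ≤ c (v₂−v₁)·x^{1/2−L}·log x`, where `a_l = (−1)^{L−l}·(L choose l)`. -/
theorem tail_difference_bound (α : ℝ) (hα : α ∈ Set.Ioo (1 : ℝ) 2) (L : ℕ)
    (hL : 2 ≤ L) :
    ∃ c > (0 : ℝ), ∀ x : ℝ, 2 * (L : ℝ) < x → ∀ v₁ v₂ : ℝ,
      1 / α < v₁ → v₁ ≤ v₂ → v₂ < 1 →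
      |(∑ l ∈ Finset.range (L + 1), ((-1 : ℝ) ^ (L - l) * (L.choose l : ℝ)) *
            ((l : ℝ) + x) ^ (v₂ - 1 / α)) -
        ∑ l ∈ Finset.range (L + 1), ((-1 : ℝ) ^ (L - l) * (L.choose l : ℝ)) *
            ((l : ℝ) + x) ^ (v₁ - 1 / α)|
        ≤ c * (v₂ - v₁) * x ^ (1 / 2 - (L : ℝ)) * Real.log x := by
  have hL2 : (2 : ℝ) ≤ L := by exact_mod_cast hL
  obtain ⟨C, hC, hΔ⟩ := exists_abs_fwdDiff_iter_rpow_sub_le L (a := 0) (b := 1 / 2) (by linarith)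
  refine ⟨C, hC, fun x hx v₁ v₂ hv₁ hv₁₂ hv₂ => ?_⟩
  have hα_half : 1 / 2 < 1 / α := one_div_lt_one_div_of_lt (by linarith [hα.1]) hα.2
  have key := hΔ (v₁ - 1 / α) ⟨by linarith, by linarith⟩ (v₂ - 1 / α) ⟨by linarith, by linarith⟩
    (by linarith) x (by linarith [exp_one_lt_d9]) (by linarith)
  rw [fwdDiff_iter_one_eq_sum, sub_sub_sub_cancel_right] at key
  rw [← Finset.sum_sub_distrib]
  convert key using 4
  ring
end

section
/- Let β ∈ (0,1/4], let H : [0,1] → [H̲,H̄] satisfy |H(t₁) − H(t₂)| ≤ c_H |t₁ − t₂|^{ρ_H} for all t₁,t₂ ∈ [0,1] (with c_H > 0 and 0 < ρ_H ≤ 1), and let X : [0,1] × [H̲,H̄] → ℝ be a function for which there is a finite constant A ≥ 0 with |X(u,v₁) − X(u,v₂)| ≤ A |v₁ − v₂| for all u ∈ [0,1] and v₁,v₂ ∈ [H̲,H̄]. For integers N and k with 0 ≤ k ≤ N − L set d_{N,k} = Σ_{l=0}^L a_l X((k+l)/N, H((k+l)/N)) and d̃_{N,k} = Σ_{l=0}^L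 a_l X((k+l)/N, H(k/N)), and for a compact interval I ⊆ [0,1] set V_N^β(I) = |ν_N(I)|^{−1} Σ_{k ∈ ν_N(I)} |d_{N,k}|^β and Ṽ_N^β(I) = |ν_N(I)|^{−1} Σ_{k ∈ ν_N(I)} |d̃_{N,k}|^β. Then for every compact interval I ⊆ [0,1] with λ(I) > 0 and every integer N ≥ 2(L+1)/λ(I) one has |V_N^β(I) − Ṽ_N^β(I)| ≤ (c_H · A · Σ_{l=1}^L l |a_l|)^β · N^{−β ρ_H}. -/
/-!
Freezing the second argument at `H(k/N)` moves it by at most `c_H (l/N)^ρ ≤ c_H l N^{-ρ}` in the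
`l`-th term, so the Lipschitz bound on `X` gives `|d_{N,k} - d̃_{N,k}| ≤ C N^{-ρ}` with
`C = c_H A Σ l |a_l|`. Since `t ↦ t^β` is subadditive on `[0, ∞)` for `β ≤ 1`, the summands
`|d_{N,k}|^β` and `|d̃_{N,k}|^β` then differ by at most `(C N^{-ρ})^β`, and averaging over `ν_N(I)`
preserves this bound.
-/

open Finset

lemma Real.rpow_sub_rpow_le_abs_sub_rpow {x y p : ℝ} (hx : 0 ≤ x) (hy : 0 ≤ y) (hp0 : 0 ≤ p)
    (hp1 : p ≤ 1) : x ^ p - y ^ p ≤ |x - y| ^ p := by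
  have hxy : x ≤ y + |x - y| := by linarith [le_abs_self (x - y)]
  have := (Real.rpow_le_rpow hx hxy hp0).trans
    (Real.rpow_add_le_add_rpow hy (abs_nonneg _) hp0 hp1)
  linarith

lemma Real.abs_rpow_sub_rpow_le {x y p : ℝ} (hx : 0 ≤ x) (hy : 0 ≤ y) (hp0 : 0 ≤ p)
    (hp1 : p ≤ 1) : |x ^ p - y ^ p| ≤ |x - y| ^ p := by
  rw [abs_sub_le_iff]
  refine ⟨Real.rpow_sub_rpow_le_abs_sub_rpow hx hy hp0 hp1, ?_⟩
  rw [abs_sub_comm]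
  exact Real.rpow_sub_rpow_le_abs_sub_rpow hy hx hp0 hp1

lemma Real.natCast_rpow_le_self (n : ℕ) {p : ℝ} (hp0 : 0 < p) (hp1 : p ≤ 1) :
    (n : ℝ) ^ p ≤ n := by
  rcases Nat.eq_zero_or_pos n with rfl | hn
  · simp [Real.zero_rpow hp0.ne']
  · exact Real.rpow_le_self_of_one_le (by exact_mod_cast hn) hp1

lemma Real.natCast_div_natCast_rpow_le (n m : ℕ) {p : ℝ} (hp0 : 0 < p) (hp1 : p ≤ 1) :
    ((n : ℝ) / m) ^ p ≤ n * (m : ℝ) ^ (-p) := by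
  rw [Real.div_rpow n.cast_nonneg m.cast_nonneg, Real.rpow_neg m.cast_nonneg, div_eq_mul_inv]
  gcongr
  exact Real.natCast_rpow_le_self n hp0 hp1

lemma Finset.abs_inv_card_mul_sum_sub_inv_card_mul_sum_le {ι K : Type*} [Field K] [LinearOrder K]
    [IsStrictOrderedRing K] {s : Finset ι} {f g : ι → K} {c : K} (hc : 0 ≤ c)
    (h : ∀ i ∈ s, |f i - g i| ≤ c) :
    |(#s : K)⁻¹ * ∑ i ∈ s, f i - (#s : K)⁻¹ * ∑ i ∈ s, g i| ≤ c := by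
  rcases s.eq_empty_or_nonempty with rfl | ⟨i, hi⟩
  · simpa using hc
  · rw [← mul_sub, ← sum_sub_distrib, abs_mul, abs_inv, Nat.abs_cast,
      inv_mul_le_iff₀ (by exact_mod_cast card_pos.2 ⟨i, hi⟩)]
    calc |∑ i ∈ s, (f i - g i)| ≤ ∑ i ∈ s, |f i - g i| := abs_sum_le_sum_abs _ _
      _ ≤ #s • c := sum_le_card_nsmul _ _ _ h
      _ = #s * c := nsmul_eq_mul _ _

section FrozenVariation

variable {Hlow Hup cH ρ A : ℝ} {H : ℝ → ℝ} {X : ℝ → ℝ → ℝ}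
  (hH : ∀ t ∈ Set.Icc (0 : ℝ) 1, H t ∈ Set.Icc Hlow Hup)
  (hHol : ∀ t₁ ∈ Set.Icc (0 : ℝ) 1, ∀ t₂ ∈ Set.Icc (0 : ℝ) 1,
    |H t₁ - H t₂| ≤ cH * |t₁ - t₂| ^ ρ)
  (hX : ∀ u ∈ Set.Icc (0 : ℝ) 1, ∀ v₁ ∈ Set.Icc Hlow Hup,
    ∀ v₂ ∈ Set.Icc Hlow Hup, |X u v₁ - X u v₂| ≤ A * |v₁ - v₂|)
  (hA : 0 ≤ A)
include hH hHol hX hA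

lemma abs_sub_comp_le_mul_rpow {s t₁ t₂ : ℝ} (hs : s ∈ Set.Icc (0 : ℝ) 1)
    (ht₁ : t₁ ∈ Set.Icc (0 : ℝ) 1) (ht₂ : t₂ ∈ Set.Icc (0 : ℝ) 1) :
    |X s (H t₁) - X s (H t₂)| ≤ A * (cH * |t₁ - t₂| ^ ρ) :=
  (hX s hs _ (hH t₁ ht₁) _ (hH t₂ ht₂)).trans
    (mul_le_mul_of_nonneg_left (hHol t₁ ht₁ t₂ ht₂) hA)

lemma abs_sum_sub_sum_frozen_le (hcH : 0 ≤ cH) (hρ0 : 0 < ρ) (hρ1 : ρ ≤ 1) (a : ℕ → ℝ)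
    {L N k : ℕ} (hkN : k + L ≤ N) :
    |∑ l ∈ range (L + 1), a l * X (((k : ℝ) + l) / N) (H (((k : ℝ) + l) / N)) -
      ∑ l ∈ range (L + 1), a l * X (((k : ℝ) + l) / N) (H ((k : ℝ) / N))| ≤
      cH * A * (∑ l ∈ range (L + 1), (l : ℝ) * |a l|) * (N : ℝ) ^ (-ρ) := by
  have grid_mem : ∀ j : ℕ, j ≤ N → (j : ℝ) / N ∈ Set.Icc (0 : ℝ) 1 := fun j hj =>
    ⟨by positivity, div_le_one_of_le₀ (by exact_mod_cast hj) N.cast_nonneg⟩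
  have term_le : ∀ l ∈ range (L + 1),
      |a l * X (((k : ℝ) + l) / N) (H (((k : ℝ) + l) / N)) -
        a l * X (((k : ℝ) + l) / N) (H ((k : ℝ) / N))| ≤
        cH * A * ((l : ℝ) * |a l|) * (N : ℝ) ^ (-ρ) := by
    intro l hl
    have hklN : k + l ≤ N := by rw [mem_range] at hl; omega
    have hmem := grid_mem (k + l) hklN
    push_cast at hmem
    have hstep : ((k : ℝ) + l) / N - k / N = (l : ℝ) / N := by rw [add_div]; ring
    have hX' := abs_sub_comp_le_mul_rpow hH hHol hX hA hmem hmem (grid_mem k (by omega))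
    rw [hstep, abs_of_nonneg (by positivity : (0 : ℝ) ≤ l / N)] at hX'
    rw [← mul_sub, abs_mul]
    calc |a l| * |X (((k : ℝ) + l) / N) (H (((k : ℝ) + l) / N)) -
            X (((k : ℝ) + l) / N) (H ((k : ℝ) / N))|
        ≤ |a l| * (A * (cH * ((l : ℝ) * (N : ℝ) ^ (-ρ)))) := by
          refine mul_le_mul_of_nonneg_left (hX'.trans ?_) (abs_nonneg _)
          gcongr
          exact Real.natCast_div_natCast_rpow_le l N hρ0 hρ1
      _ = cH * A * ((l : ℝ) * |a l|) * (N : ℝ) ^ (-ρ) := by ring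
  rw [← sum_sub_distrib, mul_sum, sum_mul]
  exact (abs_sum_le_sum_abs _ _).trans (sum_le_sum term_le)

end FrozenVariation

theorem empirical_mean_replacement_error_general (L : ℕ) (β : ℝ)
    (hβ : β ∈ Set.Ioc (0 : ℝ) (1 / 4)) (Hlow Hup : ℝ) (H : ℝ → ℝ)
    (hH : ∀ t ∈ Set.Icc (0 : ℝ) 1, H t ∈ Set.Icc Hlow Hup) (cH ρ : ℝ)
    (hcH : 0 < cH) (hρ0 : 0 < ρ) (hρ1 : ρ ≤ 1)
    (hHol : ∀ t₁ ∈ Set.Icc (0 : ℝ) 1, ∀ t₂ ∈ Set.Icc (0 : ℝ) 1,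
      |H t₁ - H t₂| ≤ cH * |t₁ - t₂| ^ ρ)
    (X : ℝ → ℝ → ℝ) (A : ℝ) (hA : 0 ≤ A)
    (hX : ∀ u ∈ Set.Icc (0 : ℝ) 1, ∀ v₁ ∈ Set.Icc Hlow Hup,
      ∀ v₂ ∈ Set.Icc Hlow Hup, |X u v₁ - X u v₂| ≤ A * |v₁ - v₂|)
    (u w : ℝ) (hu : 0 ≤ u) (huw : u < w) (hw : w ≤ 1) (N : ℕ)
    (hN : 2 * ((L : ℝ) + 1) / (w - u) ≤ (N : ℝ)) :
    let a : ℕ → ℝ := fun l => (-1 : ℝ) ^ (L - l) * (L.choose l : ℝ)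
    let ν : Finset ℕ := (Finset.range (N - L + 1)).filter fun k => (k : ℝ) / N ∈ Set.Icc u w
    let d : ℕ → ℝ := fun k => ∑ l ∈ Finset.range (L + 1),
      a l * X (((k : ℝ) + l) / N) (H (((k : ℝ) + l) / N))
    let dt : ℕ → ℝ := fun k => ∑ l ∈ Finset.range (L + 1),
      a l * X (((k : ℝ) + l) / N) (H ((k : ℝ) / N))
    let V := ((ν.card : ℝ))⁻¹ * ∑ k ∈ ν, |d k| ^ β
    let Vt := ((ν.card : ℝ))⁻¹ * ∑ k ∈ ν, |dt k| ^ β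
    |V - Vt| ≤
      (cH * A * ∑ l ∈ Finset.range (L + 1), (l : ℝ) * |a l|) ^ β *
        (N : ℝ) ^ (-β * ρ) := by
  intro a ν d dt V Vt
  obtain ⟨hβ0, hβ⟩ := hβ
  have hLN : L ≤ N := by
    rw [div_le_iff₀ (by linarith)] at hN
    have : (L : ℝ) ≤ N := by nlinarith [(Nat.cast_nonneg N : (0 : ℝ) ≤ N)]
    exact_mod_cast this
  set C := cH * A * ∑ l ∈ range (L + 1), (l : ℝ) * |a l|
  have hC : 0 ≤ C := by positivity
  refine abs_inv_card_mul_sum_sub_inv_card_mul_sum_le (by positivity) fun k hk => ?_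
  have hkN : k + L ≤ N := by rw [mem_filter, mem_range] at hk; omega
  calc |(|d k| ^ β - |dt k| ^ β)| ≤ |(|d k| - |dt k|)| ^ β :=
        Real.abs_rpow_sub_rpow_le (abs_nonneg _) (abs_nonneg _) hβ0.le (by linarith)
    _ ≤ |d k - dt k| ^ β :=
        Real.rpow_le_rpow (abs_nonneg _) (abs_abs_sub_abs_le_abs_sub _ _) hβ0.le
    _ ≤ (C * (N : ℝ) ^ (-ρ)) ^ β := by
        gcongr
        exact abs_sum_sub_sum_frozen_le hH hHol hX hA hcH.le hρ0 hρ1 a hkN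
    _ = C ^ β * (N : ℝ) ^ (-β * ρ) := by
        rw [Real.mul_rpow hC (by positivity), ← Real.rpow_mul N.cast_nonneg, neg_mul, neg_mul,
          mul_comm ρ]

/-- Control of the error stemming from replacing the empirical
mean `V_N^β(I)` of the variations `d_{N,k}` by the empirical mean `Ṽ_N^β(I)` of
the frozen variations `d̃_{N,k}`:
`|V_N^β(I) − Ṽ_N^β(I)| ≤ (c_H·A·Σ_{l=1}^L l|a_l|)^β · N^{−βρ_H}`. -/
theorem empirical_mean_replacement_error (L : ℕ) (hL : 2 ≤ L) (β : ℝ)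
    (hβ : β ∈ Set.Ioc (0 : ℝ) (1 / 4)) (Hlow Hup : ℝ) (h0 : 0 < Hlow)
    (h1 : Hlow ≤ Hup) (h2 : Hup < 1) (H : ℝ → ℝ)
    (hH : ∀ t ∈ Set.Icc (0 : ℝ) 1, H t ∈ Set.Icc Hlow Hup) (cH ρ : ℝ)
    (hcH : 0 < cH) (hρ0 : 0 < ρ) (hρ1 : ρ ≤ 1)
    (hHol : ∀ t₁ ∈ Set.Icc (0 : ℝ) 1, ∀ t₂ ∈ Set.Icc (0 : ℝ) 1,
      |H t₁ - H t₂| ≤ cH * |t₁ - t₂| ^ ρ)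
    (X : ℝ → ℝ → ℝ) (A : ℝ) (hA : 0 ≤ A)
    (hX : ∀ u ∈ Set.Icc (0 : ℝ) 1, ∀ v₁ ∈ Set.Icc Hlow Hup,
      ∀ v₂ ∈ Set.Icc Hlow Hup, |X u v₁ - X u v₂| ≤ A * |v₁ - v₂|)
    (u w : ℝ) (hu : 0 ≤ u) (huw : u < w) (hw : w ≤ 1) (N : ℕ)
    (hN : 2 * ((L : ℝ) + 1) / (w - u) ≤ (N : ℝ)) :
    let a : ℕ → ℝ := fun l => (-1 : ℝ) ^ (L - l) * (L.choose l : ℝ)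
    let ν : Finset ℕ := (Finset.range (N - L + 1)).filter fun k => (k : ℝ) / N ∈ Set.Icc u w
    let d : ℕ → ℝ := fun k => ∑ l ∈ Finset.range (L + 1),
      a l * X (((k : ℝ) + l) / N) (H (((k : ℝ) + l) / N))
    let dt : ℕ → ℝ := fun k => ∑ l ∈ Finset.range (L + 1),
      a l * X (((k : ℝ) + l) / N) (H ((k : ℝ) / N))
    let V := ((ν.card : ℝ))⁻¹ * ∑ k ∈ ν, |d k| ^ β
    let Vt := ((ν.card : ℝ))⁻¹ * ∑ k ∈ ν, |dt k| ^ β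
    |V - Vt| ≤
      (cH * A * ∑ l ∈ Finset.range (L + 1), (l : ℝ) * |a l|) ^ β *
        (N : ℝ) ^ (-β * ρ) :=
  empirical_mean_replacement_error_general L β hβ Hlow Hup H hH cH ρ hcH hρ0 hρ1 hHol X A hA hX u w
    hu huw hw N hN
end

section
/- Let β ∈ (0,1/4] and let H : [0,1] → [H̲,H̄] with 1/2 < H̲ ≤ H̄ < 1 satisfy |H(t₁) − H(t₂)| ≤ c_H |t₁ − t₂|^{ρ_H} for all t₁,t₂ ∈ [0,1], where c_H > 0 and 1/2 < ρ_H ≤ 1. Then there exists a constant c' > 0 (depending only on β, c_H, ρ_H and L, not on I and N) such that for every compact interval I ⊆ [0,1] and every integer N ≥ 4 with λ(I) ≥ 4(L+1) N^{−1} (log N)², one has |ν_N(I)|^{−1} Σ_{k ∈ ν_N(I)} N^{−β H(k/N)} ≥ c' · N^{−β H̲(I)} / (log N)², where H̲(I) = min_{t ∈ I} H(t). -/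
/-!
Pick `t ∈ I` with `H t < H̲(I) + 1 / log N` and a window `J ∋ t` inside `I` of length
`λ(I) / (2 (log N)²)`. Since `ρ_H > 1/2`, Hölder continuity keeps
`H ≤ H̲(I) + (1 + c_H) / log N` on `J`, so every term indexed by `J` is at least
`e^{-β(1 + c_H)} N^{-β H̲(I)}`; the length assumption makes `J` carry at least a
`1 / (5 (log N)²)` fraction of the grid points of `I`.
-/

open Finset Real

/-- The index set `ν_N([a, b])`. -/
noncomputable def gridIndices (N L : ℕ) (a b : ℝ) : Finset ℕ :=
  (range (N - L + 1)).filter fun k => (k : ℝ) / N ∈ Set.Icc a b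

theorem mem_gridIndices {N L k : ℕ} {a b : ℝ} :
    k ∈ gridIndices N L a b ↔ k ≤ N - L ∧ (k : ℝ) / N ∈ Set.Icc a b := by
  simp only [gridIndices, mem_filter, mem_range, Nat.lt_succ_iff]

theorem gridIndices_mono {N L : ℕ} {a b a' b' : ℝ} (h : Set.Icc a' b' ⊆ Set.Icc a b) :
    gridIndices N L a' b' ⊆ gridIndices N L a b :=
  fun _ hk => mem_gridIndices.2 ⟨(mem_gridIndices.1 hk).1, h (mem_gridIndices.1 hk).2⟩

theorem card_le_sub_add_one_of_forall_mem_Icc (s : Finset ℕ) {x y : ℝ} (hxy : x ≤ y)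
    (hs : ∀ k ∈ s, (k : ℝ) ∈ Set.Icc x y) : (#s : ℝ) ≤ y - x + 1 := by
  rcases s.eq_empty_or_nonempty with rfl | hne
  · simp only [card_empty, Nat.cast_zero]; linarith
  have hsub : s ⊆ Icc (s.min' hne) (s.max' hne) :=
    fun k hk => mem_Icc.2 ⟨s.min'_le k hk, s.le_max' k hk⟩
  have hcard : #s ≤ s.max' hne + 1 - s.min' hne := by
    simpa only [Nat.card_Icc] using card_le_card hsub
  have hle : s.min' hne ≤ s.max' hne + 1 := (s.min'_le_max' hne).trans (Nat.le_succ _)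
  have hcard' : (#s : ℝ) ≤ (s.max' hne : ℝ) + 1 - s.min' hne := by
    rw [← Nat.cast_one, ← Nat.cast_add, ← Nat.cast_sub hle]; exact_mod_cast hcard
  linarith [(hs _ (s.min'_mem hne)).1, (hs _ (s.max'_mem hne)).2]

theorem sub_sub_one_le_card_Icc_ceil_floor {x y : ℝ} (hx : 0 ≤ x) :
    y - x - 1 ≤ (#(Icc ⌈x⌉₊ ⌊y⌋₊) : ℝ) := by
  have htsub : (⌊y⌋₊ + 1 : ℝ) ≤ (#(Icc ⌈x⌉₊ ⌊y⌋₊) : ℝ) + ⌈x⌉₊ := by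
    rw [Nat.card_Icc]; exact_mod_cast le_tsub_add
  linarith [Nat.sub_one_lt_floor y, Nat.ceil_lt_add_one hx]

theorem card_gridIndices_le {N : ℕ} (L : ℕ) {u w : ℝ} (hN : 0 < N) (huw : u ≤ w) :
    (#(gridIndices N L u w) : ℝ) ≤ N * (w - u) + 1 := by
  have hN' : (0 : ℝ) < N := Nat.cast_pos.2 hN
  have hcard := card_le_sub_add_one_of_forall_mem_Icc (gridIndices N L u w)
    (mul_le_mul_of_nonneg_left huw hN'.le) fun k hk => by
      obtain ⟨-, hku, hkw⟩ := mem_gridIndices.1 hk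
      exact ⟨by rwa [le_div_iff₀' hN'] at hku, by rwa [div_le_iff₀' hN'] at hkw⟩
  linarith

theorem card_gridIndices_ge {N : ℕ} (L : ℕ) {a b : ℝ} (hN : 0 < N) (ha : 0 ≤ a)
    (hab : a ≤ b) (hb : b ≤ 1) : N * (b - a) - L - 1 ≤ (#(gridIndices N L a b) : ℝ) := by
  have hN' : (0 : ℝ) < N := Nat.cast_pos.2 hN
  set y := min ((N : ℝ) * b) ((N - L : ℕ) : ℝ)
  have hsub : Icc ⌈(N : ℝ) * a⌉₊ ⌊y⌋₊ ⊆ gridIndices N L a b := by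
    intro k hk
    obtain ⟨hak, hky⟩ := mem_Icc.1 hk
    have hy0 : 0 ≤ y := le_min (by nlinarith) (Nat.cast_nonneg _)
    have hky' : (k : ℝ) ≤ y := (Nat.le_floor_iff hy0).1 hky
    refine mem_gridIndices.2 ⟨by exact_mod_cast hky'.trans (min_le_right _ _), ?_, ?_⟩
    · rw [le_div_iff₀' hN']; exact Nat.ceil_le.1 hak
    · rw [div_le_iff₀' hN']; exact hky'.trans (min_le_left _ _)
  have hy : (N : ℝ) * b - L ≤ y := by
    have hNL : (N : ℝ) ≤ ((N - L : ℕ) : ℝ) + L := by exact_mod_cast le_tsub_add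
    refine le_min (by linarith [Nat.cast_nonneg (α := ℝ) L]) ?_
    nlinarith
  linarith [sub_sub_one_le_card_Icc_ceil_floor (y := y) (by positivity : 0 ≤ (N : ℝ) * a),
    (Nat.cast_le (α := ℝ)).2 (card_le_card hsub)]

theorem exists_Icc_subset_Icc_length_mem {u w t ℓ : ℝ} (ht : t ∈ Set.Icc u w)
    (hℓ : 0 ≤ ℓ) (hℓuw : ℓ ≤ w - u) :
    ∃ a, Set.Icc a (a + ℓ) ⊆ Set.Icc u w ∧ t ∈ Set.Icc a (a + ℓ) := by
  refine ⟨min t (w - ℓ), Set.Icc_subset_Icc (le_min ht.1 (by linarith)) ?_,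
    min_le_left _ _, ?_⟩
  · linarith [min_le_right t (w - ℓ)]
  · rw [← min_add_add_right, sub_add_cancel]
    exact le_min (by linarith) ht.2

theorem exists_gridIndices_window {N L : ℕ} {u w t S : ℝ} (hN : 0 < N) (hu : 0 ≤ u)
    (hw : w ≤ 1) (hS : 1 ≤ S) (hlen : 4 * (L + 1) * S / N ≤ w - u) (ht : t ∈ Set.Icc u w) :
    ∃ a b, Set.Icc a b ⊆ Set.Icc u w ∧ t ∈ Set.Icc a b ∧ (b - a) * S ≤ 1 ∧
      (gridIndices N L a b).Nonempty ∧
      (#(gridIndices N L u w) : ℝ) ≤ 5 * S * #(gridIndices N L a b) := by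
  have hN' : (0 : ℝ) < N := Nat.cast_pos.2 hN
  have hlen' : 4 * (L + 1) * S ≤ N * (w - u) := by rwa [div_le_iff₀' hN'] at hlen
  have hL : (0 : ℝ) ≤ L := Nat.cast_nonneg L
  have huw : 4 ≤ N * (w - u) := by nlinarith
  set ℓ := (w - u) / (2 * S)
  have hℓ : 2 * S * ℓ = w - u := mul_div_cancel₀ _ (by positivity)
  have hℓ0 : 0 ≤ ℓ := div_nonneg (by nlinarith) (by positivity)
  obtain ⟨a, hsub, hta⟩ := exists_Icc_subset_Icc_length_mem ht hℓ0 (by nlinarith)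
  have ha := (Set.Icc_subset_Icc_iff (by linarith)).1 hsub
  have hcount := card_gridIndices_ge L hN (hu.trans ha.1) (by linarith) (ha.2.trans hw)
  have hNℓ : 2 * (L + 1) ≤ N * ℓ := by nlinarith
  refine ⟨a, a + ℓ, hsub, hta, by nlinarith, ?_, ?_⟩
  · exact card_pos.1 (by exact_mod_cast (show (0 : ℝ) < _ by nlinarith).trans_le hcount)
  · nlinarith [card_gridIndices_le L hN (show u ≤ w by nlinarith)]

theorem rpow_le_inv_of_mul_sq_le_one {ℓ X ρ : ℝ} (hℓ : 0 ≤ ℓ) (hX : 1 ≤ X)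
    (hℓX : ℓ * X ^ 2 ≤ 1) (hρ : 1 / 2 ≤ ρ) : ℓ ^ ρ ≤ X⁻¹ := by
  have hℓ1 : ℓ ≤ 1 := by
    nlinarith [mul_le_mul_of_nonneg_left (one_le_pow₀ (n := 2) hX) hℓ]
  calc ℓ ^ ρ ≤ ℓ ^ (1 / 2 : ℝ) := rpow_le_rpow_of_exponent_ge' hℓ hℓ1 (by norm_num) hρ
    _ = √ℓ := (sqrt_eq_rpow ℓ).symm
    _ ≤ √(X⁻¹ ^ 2) := by
      gcongr
      rwa [inv_pow, ← one_div, le_div_iff₀ (by positivity)]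
    _ = X⁻¹ := sqrt_sq (by positivity)

theorem le_add_mul_rpow_of_holder {H : ℝ → ℝ} {s : Set ℝ} {c ρ x t δ : ℝ}
    (hH : ∀ t₁ ∈ s, ∀ t₂ ∈ s, |H t₁ - H t₂| ≤ c * |t₁ - t₂| ^ ρ)
    (hc : 0 ≤ c) (hρ : 0 ≤ ρ) (hx : x ∈ s) (ht : t ∈ s) (hxt : |x - t| ≤ δ) :
    H x ≤ H t + c * δ ^ ρ := by
  have hHxt := (abs_le.1 (hH x hx t ht)).2
  have hpow : |x - t| ^ ρ ≤ δ ^ ρ := rpow_le_rpow (abs_nonneg _) hxt hρ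
  nlinarith

theorem exp_mul_rpow_le_rpow {N β c h m : ℝ} (hN : 1 < N) (hβ : 0 ≤ β)
    (hh : h ≤ m + c * (log N)⁻¹) : exp (-(β * c)) * N ^ (-(β * m)) ≤ N ^ (-(β * h)) := by
  have hN0 : 0 < N := by linarith
  have hlog : log N ≠ 0 := (log_pos hN).ne'
  calc exp (-(β * c)) * N ^ (-(β * m)) = N ^ (-(β * (m + c * (log N)⁻¹))) := by
        rw [rpow_def_of_pos hN0, rpow_def_of_pos hN0, ← exp_add]
        congr 1; field_simp; ring
    _ ≤ N ^ (-(β * h)) := rpow_le_rpow_of_exponent_le hN.le (by nlinarith)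

theorem div_le_inv_card_mul_sum_of_subset {ι : Type*} {G ν : Finset ι} {f : ι → ℝ}
    {c K : ℝ} (hGν : G ⊆ ν) (hG : G.Nonempty) (hf : ∀ k ∈ ν, 0 ≤ f k)
    (hc : ∀ k ∈ G, c ≤ f k) (hc0 : 0 ≤ c) (hK : (#ν : ℝ) ≤ K * #G) :
    c / K ≤ (#ν : ℝ)⁻¹ * ∑ k ∈ ν, f k := by
  have hGpos : (0 : ℝ) < #G := by exact_mod_cast hG.card_pos
  have hνG : (#G : ℝ) ≤ #ν := by exact_mod_cast card_le_card hGν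
  have hK0 : 0 < K := by nlinarith
  have hsum : #G * c ≤ ∑ k ∈ ν, f k := by
    rw [← nsmul_eq_mul]
    exact (card_nsmul_le_sum G f c hc).trans
      (sum_le_sum_of_subset_of_nonneg hGν fun k hk _ => hf k hk)
  rw [inv_mul_eq_div, div_le_div_iff₀ hK0 (by linarith)]
  nlinarith

theorem averaged_power_sum_lower_bound_general (L : ℕ) (β : ℝ)
    (hβ : β ∈ Set.Ioc (0 : ℝ) (1 / 4)) (H : ℝ → ℝ) (cH ρ : ℝ)
    (hcH : 0 < cH) (hρ0 : 1 / 2 < ρ)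
    (hHol : ∀ t₁ ∈ Set.Icc (0 : ℝ) 1, ∀ t₂ ∈ Set.Icc (0 : ℝ) 1,
      |H t₁ - H t₂| ≤ cH * |t₁ - t₂| ^ ρ) :
    ∃ c' > (0 : ℝ), ∀ u w : ℝ, 0 ≤ u → u < w → w ≤ 1 → ∀ N : ℕ, 4 ≤ N →
      4 * ((L : ℝ) + 1) * (Real.log N) ^ 2 / N ≤ w - u →
      let ν : Finset ℕ :=
        (Finset.range (N - L + 1)).filter fun k => (k : ℝ) / N ∈ Set.Icc u w
      c' * (N : ℝ) ^ (-(β * sInf (H '' Set.Icc u w))) / (Real.log N) ^ 2 ≤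
        ((ν.card : ℝ))⁻¹ * ∑ k ∈ ν, (N : ℝ) ^ (-(β * H ((k : ℝ) / N))) := by
  refine ⟨exp (-(β * (1 + cH))) / 5, by positivity, fun u w hu huw hw N hN hlen => ?_⟩
  have hN4 : (4 : ℝ) ≤ N := by exact_mod_cast hN
  have hlog : 1 ≤ log N := by
    rw [le_log_iff_exp_le (by linarith)]; linarith [exp_one_lt_d9]
  set m := sInf (H '' Set.Icc u w)
  obtain ⟨_, ⟨t, ht, rfl⟩, htm⟩ := lt_sInf_add_pos ((Set.nonempty_Icc.2 huw.le).image H)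
    (inv_pos.2 (by linarith : (0 : ℝ) < log N))
  obtain ⟨a, b, hab, htab, hba, hG, hνG⟩ := exists_gridIndices_window (by omega) hu hw
    (one_le_pow₀ hlog) hlen ht
  have hunit : Set.Icc u w ⊆ Set.Icc 0 1 := Set.Icc_subset_Icc hu hw
  have hterm : ∀ k ∈ gridIndices N L a b,
      exp (-(β * (1 + cH))) * (N : ℝ) ^ (-(β * m)) ≤ (N : ℝ) ^ (-(β * H (k / N))) := by
    intro k hk
    have hx := (mem_gridIndices.1 hk).2
    have hHx := le_add_mul_rpow_of_holder hHol hcH.le (by linarith) (hunit (hab hx))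
      (hunit (hab htab)) (abs_sub_le_of_le_of_le hx.1 hx.2 htab.1 htab.2)
    have hδ := rpow_le_inv_of_mul_sq_le_one (by linarith [htab.1, htab.2]) hlog hba hρ0.le
    exact exp_mul_rpow_le_rpow (by linarith) hβ.1.le (by nlinarith)
  calc exp (-(β * (1 + cH))) / 5 * (N : ℝ) ^ (-(β * m)) / log N ^ 2
      = exp (-(β * (1 + cH))) * (N : ℝ) ^ (-(β * m)) / (5 * log N ^ 2) := by ring
    _ ≤ _ := div_le_inv_card_mul_sum_of_subset (gridIndices_mono hab) hG
      (fun _ _ => by positivity) hterm (by positivity) hνG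

/-- Lower bound for the averaged power sum: there is `c' > 0`
(depending only on `β, c_H, ρ_H, L`) such that for every compact interval
`I = [u,w] ⊆ [0,1]` and every `N ≥ 4` with `λ(I) ≥ 4(L+1)N^{−1}(log N)²`,
`|ν_N(I)|^{−1} Σ_{k∈ν_N(I)} N^{−βH(k/N)} ≥ c'·N^{−βH̲(I)}/(log N)²`, where
`H̲(I) = min_{t∈I} H(t)`. -/
theorem averaged_power_sum_lower_bound (L : ℕ) (hL : 2 ≤ L) (β : ℝ)
    (hβ : β ∈ Set.Ioc (0 : ℝ) (1 / 4)) (Hlow Hup : ℝ) (h0 : 1 / 2 < Hlow)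
    (h1 : Hlow ≤ Hup) (h2 : Hup < 1) (H : ℝ → ℝ)
    (hH : ∀ t ∈ Set.Icc (0 : ℝ) 1, H t ∈ Set.Icc Hlow Hup) (cH ρ : ℝ)
    (hcH : 0 < cH) (hρ0 : 1 / 2 < ρ) (hρ1 : ρ ≤ 1)
    (hHol : ∀ t₁ ∈ Set.Icc (0 : ℝ) 1, ∀ t₂ ∈ Set.Icc (0 : ℝ) 1,
      |H t₁ - H t₂| ≤ cH * |t₁ - t₂| ^ ρ) :
    ∃ c' > (0 : ℝ), ∀ u w : ℝ, 0 ≤ u → u < w → w ≤ 1 → ∀ N : ℕ, 4 ≤ N →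
      4 * ((L : ℝ) + 1) * (Real.log N) ^ 2 / N ≤ w - u →
      let ν : Finset ℕ :=
        (Finset.range (N - L + 1)).filter fun k => (k : ℝ) / N ∈ Set.Icc u w
      c' * (N : ℝ) ^ (-(β * sInf (H '' Set.Icc u w))) / (Real.log N) ^ 2 ≤
        ((ν.card : ℝ))⁻¹ * ∑ k ∈ ν, (N : ℝ) ^ (-(β * H ((k : ℝ) / N))) :=
  averaged_power_sum_lower_bound_general L β hβ H cH ρ hcH hρ0 hHol
end

section
/- Let θ ∈ (0,1/2], let ρ ∈ (0,1], let c ≥ 0, set w₀ = 1 + ρ, and let b be a real number with 0 < b < ρ/(1+ρ). Let f, g : [0,1] → ℝ be functions such that |f(t₁) − f(t₂)| ≤ θ^{−1} |t₁ − t₂| and |g(t₁) − g(t₂)| ≤ c |t₁ − t₂|^{ρ} for all t₁, t₂ ∈ [0,1]. Then for all t₁, t₂ with 0 ≤ t₁ < t₂ ≤ 1 one has |f(t₁) − f(t₂) − g(t₁) + g(t₂)| / |t₁ − t₂|^b ≤ θ^{w₀(1−b)−1} + c · θ^{w₀(ρ−b)} + 2 θ^{−w₀ b} · sup_{t ∈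 [0,1]} |f(t) − g(t)|. -/
/-!
Write `δ = |t₁ - t₂|`, `w₀ = 1 + ρ` and `S = sup |f - g|`. The increment of `f - g` over
`[t₁, t₂]` is bounded in two ways: by `θ⁻¹ δ + c δ^ρ` (Lipschitz plus Hölder) and by `2 S`.
For `δ ≤ θ^w₀` the first bound, divided by `δ^b`, gives the first two terms; for `δ > θ^w₀`
the second one gives the last term, since then `δ^b ≥ θ^(w₀ b)`.
-/

open Set

theorem le_biSup_of_forall_le {ι α : Type*} [ConditionallyCompleteLattice α] {F : ι → α}
    {s : Set ι} {M : α} (hM : ∀ t ∈ s, F t ≤ M) {t : ι} (ht : t ∈ s) :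
    F t ≤ ⨆ t ∈ s, F t :=
  le_ciSup₂ (f := fun t (_ : t ∈ s) => F t)
    ⟨M, by rintro _ ⟨_, ⟨t, rfl⟩, ⟨ht, rfl⟩⟩; exact hM t ht⟩ t ht

section LipschitzHolder

variable {f g : ℝ → ℝ} {L c ρ : ℝ}

theorem abs_increment_sub_increment_le {s : Set ℝ}
    (hf : ∀ t₁ ∈ s, ∀ t₂ ∈ s, |f t₁ - f t₂| ≤ L * |t₁ - t₂|)
    (hg : ∀ t₁ ∈ s, ∀ t₂ ∈ s, |g t₁ - g t₂| ≤ c * |t₁ - t₂| ^ ρ)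
    {t₁ t₂ : ℝ} (h₁ : t₁ ∈ s) (h₂ : t₂ ∈ s) :
    |f t₁ - f t₂ - g t₁ + g t₂| ≤ L * |t₁ - t₂| + c * |t₁ - t₂| ^ ρ :=
  calc |f t₁ - f t₂ - g t₁ + g t₂| = |(f t₁ - f t₂) - (g t₁ - g t₂)| := by ring_nf
    _ ≤ |f t₁ - f t₂| + |g t₁ - g t₂| := abs_sub _ _
    _ ≤ L * |t₁ - t₂| + c * |t₁ - t₂| ^ ρ := add_le_add (hf t₁ h₁ t₂ h₂) (hg t₁ h₁ t₂ h₂)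

theorem abs_sub_le_biSup_Icc (hL : 0 ≤ L) (hc : 0 ≤ c) (hρ : 0 ≤ ρ)
    (hf : ∀ t₁ ∈ Icc (0 : ℝ) 1, ∀ t₂ ∈ Icc (0 : ℝ) 1, |f t₁ - f t₂| ≤ L * |t₁ - t₂|)
    (hg : ∀ t₁ ∈ Icc (0 : ℝ) 1, ∀ t₂ ∈ Icc (0 : ℝ) 1, |g t₁ - g t₂| ≤ c * |t₁ - t₂| ^ ρ)
    {t : ℝ} (ht : t ∈ Icc (0 : ℝ) 1) :
    |f t - g t| ≤ ⨆ t ∈ Icc (0 : ℝ) 1, |f t - g t| := by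
  refine le_biSup_of_forall_le (F := fun t => |f t - g t|) (M := L + c + |f 0 - g 0|)
    (fun t ht => ?_) ht
  have h0 : (0 : ℝ) ∈ Icc (0 : ℝ) 1 := ⟨le_rfl, zero_le_one⟩
  have hdist : |t - 0| ≤ 1 := by rw [sub_zero, abs_of_nonneg ht.1]; exact ht.2
  have hinc := abs_increment_sub_increment_le hf hg ht h0
  have hL' : L * |t - 0| ≤ L := mul_le_of_le_one_right hL hdist
  have hc' : c * |t - 0| ^ ρ ≤ c :=
    mul_le_of_le_one_right hc (Real.rpow_le_one (abs_nonneg _) hdist hρ)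
  calc |f t - g t| = |(f t - f 0 - g t + g 0) + (f 0 - g 0)| := by ring_nf
    _ ≤ |f t - f 0 - g t + g 0| + |f 0 - g 0| := abs_add_le _ _
    _ ≤ L + c + |f 0 - g 0| := by linarith

end LipschitzHolder

section Interpolation

variable {θ ρ c b w δ : ℝ}

theorem lipschitz_holder_div_rpow_le_of_le_rpow (hθ : 0 < θ) (hc : 0 ≤ c) (hδ : 0 < δ)
    (hδθ : δ ≤ θ ^ w) (hb1 : b ≤ 1) (hbρ : b ≤ ρ) :
    (θ⁻¹ * δ + c * δ ^ ρ) / δ ^ b ≤ θ ^ (w * (1 - b) - 1) + c * θ ^ (w * (ρ - b)) := by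
  have hpow {a : ℝ} (ha : 0 ≤ a) : δ ^ a ≤ θ ^ (w * a) := by
    rw [Real.rpow_mul hθ.le]
    exact Real.rpow_le_rpow hδ.le hδθ ha
  calc (θ⁻¹ * δ + c * δ ^ ρ) / δ ^ b = θ⁻¹ * δ ^ (1 - b) + c * δ ^ (ρ - b) := by
        rw [add_div, mul_div_assoc, mul_div_assoc, Real.rpow_sub hδ, Real.rpow_sub hδ,
          Real.rpow_one]
    _ ≤ θ⁻¹ * θ ^ (w * (1 - b)) + c * θ ^ (w * (ρ - b)) := by
        gcongr
        · exact hpow (by linarith)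
        · exact hpow (by linarith)
    _ = θ ^ (w * (1 - b) - 1) + c * θ ^ (w * (ρ - b)) := by
        rw [Real.rpow_sub hθ, Real.rpow_one, inv_mul_eq_div]

theorem div_rpow_le_of_rpow_le {S : ℝ} (hθ : 0 < θ) (hδθ : θ ^ w ≤ δ) (hb : 0 ≤ b)
    (hS : 0 ≤ S) : 2 * S / δ ^ b ≤ 2 * θ ^ (-(w * b)) * S := by
  have hθwb : θ ^ (w * b) ≤ δ ^ b := by
    rw [Real.rpow_mul hθ.le]
    exact Real.rpow_le_rpow (by positivity) hδθ hb
  calc 2 * S / δ ^ b ≤ 2 * S / θ ^ (w * b) := by gcongr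
    _ = 2 * θ ^ (-(w * b)) * S := by rw [Real.rpow_neg hθ.le, div_eq_mul_inv]; ring

theorem div_rpow_le_interpolation {N S : ℝ} (hθ : 0 < θ) (hc : 0 ≤ c) (hS : 0 ≤ S)
    (hδ : 0 < δ) (hb0 : 0 ≤ b) (hb1 : b ≤ 1) (hbρ : b ≤ ρ)
    (hN_lip : N ≤ θ⁻¹ * δ + c * δ ^ ρ) (hN_sup : N ≤ 2 * S) :
    N / δ ^ b ≤ θ ^ (w * (1 - b) - 1) + c * θ ^ (w * (ρ - b)) + 2 * θ ^ (-(w * b)) * S := by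
  have hδb : 0 < δ ^ b := Real.rpow_pos_of_pos hδ b
  rcases le_or_gt δ (θ ^ w) with hsmall | hlarge
  · have := lipschitz_holder_div_rpow_le_of_le_rpow hθ hc hδ hsmall hb1 hbρ
    have : N / δ ^ b ≤ (θ⁻¹ * δ + c * δ ^ ρ) / δ ^ b := by gcongr
    have : 0 ≤ 2 * θ ^ (-(w * b)) * S := by positivity
    linarith
  · have := div_rpow_le_of_rpow_le hθ hlarge.le hb0 hS
    have : N / δ ^ b ≤ 2 * S / δ ^ b := by gcongr
    have : 0 ≤ θ ^ (w * (1 - b) - 1) + c * θ ^ (w * (ρ - b)) := by positivity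
    linarith

end Interpolation

/-- Let `θ ∈ (0,1/2]`, `ρ ∈ (0,1]`, `c ≥ 0`, `w₀ = 1+ρ` and
`0 < b < ρ/(1+ρ)`. If `f` is `θ⁻¹`-Lipschitz on `[0,1]` and `g` is
`ρ`-Hölder with constant `c` on `[0,1]`, then for all `0 ≤ t₁ < t₂ ≤ 1`,
`|f(t₁) − f(t₂) − g(t₁) + g(t₂)|/|t₁−t₂|^b
  ≤ θ^{w₀(1−b)−1} + c·θ^{w₀(ρ−b)} + 2θ^{−w₀b}·sup_{t∈[0,1]} |f(t)−g(t)|`. -/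
theorem holder_norm_interpolation_bound (θ ρ c b : ℝ)
    (hθ : θ ∈ Set.Ioc (0 : ℝ) (1 / 2)) (hρ : ρ ∈ Set.Ioc (0 : ℝ) 1)
    (hc : 0 ≤ c) (hb0 : 0 < b) (hb1 : b < ρ / (1 + ρ)) (f g : ℝ → ℝ)
    (hf : ∀ t₁ ∈ Set.Icc (0 : ℝ) 1, ∀ t₂ ∈ Set.Icc (0 : ℝ) 1,
      |f t₁ - f t₂| ≤ θ⁻¹ * |t₁ - t₂|)
    (hg : ∀ t₁ ∈ Set.Icc (0 : ℝ) 1, ∀ t₂ ∈ Set.Icc (0 : ℝ) 1,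
      |g t₁ - g t₂| ≤ c * |t₁ - t₂| ^ ρ)
    (t₁ t₂ : ℝ) (h0 : 0 ≤ t₁) (h12 : t₁ < t₂) (h1 : t₂ ≤ 1) :
    |f t₁ - f t₂ - g t₁ + g t₂| / |t₁ - t₂| ^ b ≤
      θ ^ ((1 + ρ) * (1 - b) - 1) + c * θ ^ ((1 + ρ) * (ρ - b)) +
        2 * θ ^ (-((1 + ρ) * b)) * ⨆ t ∈ Set.Icc (0 : ℝ) 1, |f t - g t| := by
  obtain ⟨hθ0, -⟩ := hθ
  obtain ⟨hρ0, -⟩ := hρ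
  have hbρ : b < ρ := hb1.trans_le (div_le_self hρ0.le (by linarith))
  have hb_lt_one : b < 1 := hb1.trans (by rw [div_lt_one (by linarith)]; linarith)
  have ht₁ : t₁ ∈ Icc (0 : ℝ) 1 := ⟨h0, by linarith⟩
  have ht₂ : t₂ ∈ Icc (0 : ℝ) 1 := ⟨by linarith, h1⟩
  have hsup (t : ℝ) (ht : t ∈ Icc (0 : ℝ) 1) :=
    abs_sub_le_biSup_Icc (inv_nonneg.2 hθ0.le) hc hρ0.le hf hg ht
  refine div_rpow_le_interpolation hθ0 hc ((abs_nonneg _).trans (hsup t₁ ht₁))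
    (abs_pos.2 (sub_ne_zero.2 h12.ne)) hb0.le hb_lt_one.le hbρ.le
    (abs_increment_sub_increment_le hf hg ht₁ ht₂) ?_
  calc |f t₁ - f t₂ - g t₁ + g t₂| = |(f t₁ - g t₁) - (f t₂ - g t₂)| := by ring_nf
    _ ≤ |f t₁ - g t₁| + |f t₂ - g t₂| := abs_sub _ _
    _ ≤ _ := by linarith [hsup t₁ ht₁, hsup t₂ ht₂]
end
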